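/- arXiv:1111.0057 — 6 statements merged into one kernel-verified Lean document; each statement's English description precedes it below -/
import Mathlib

section
/- Let (λ_{d,i})_{d∈ℕ, i∈ℕ} be nonnegative real numbers such that for each d the sequence i ↦ λ_{d,i} is nonincreasing. (i) If there exist constants C, p > 0 and q ≥ 0 such that for all d ∈ ℕ and all ε ∈ (0,1] the set {i ∈ ℕ : λ_{d,i} > ε²} is finite with at most C·ε^{−p}·d^q elements, then for every τ > p/2, with f(d) = ⌈(1+C)·d^q⌉, one has sup_{d∈ℕ} d^{−2q/p} · ( Σ_{i≥f(d)} λ_{d,i}^τ )^{1/τ} ≤ C^{2/p} · ζ(2τ/p)^{1/τ} < ∞, where ζ is the Riemann zeta function. (ii) Conversely, if for some r ≥ 0, τ > 0, C > 0 and p, q ≥ 0, setting f(d) = ⌈C · (min(√(λ_{d,1}), 1))^{−p} · d^q⌉, the quantity C_τ = sup_{d∈ℕ} d^{−r} · ( Σ_{i≥f(d)} λ_{d,i}^τ )^{1/τ} is finite, then for every d ∈ ℕ and every ε ∈ (0,1] the set {i ∈ ℕ : λ_{d,i} > ε²} is finite with at most (C + C_τ^τ) · ε^{−max(p,2τ)}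 · d^{max(q, rτ)} elements. -/
open scoped ENNReal

noncomputable section

/-- The Riemann zeta function at a real argument `s > 1`, as the sum
`∑_{n=1}^∞ n^{-s}` in `[0,∞]`. -/
def zetaSum (s : ℝ) : ℝ≥0∞ := ∑' n : ℕ, ((n : ℝ≥0∞) + 1) ^ (-s)

/-!
(i) By monotonicity, `λ_{d,i} > ε²` forces `i ≤ n(ε, d) ≤ C ε^{-p} d^q`; letting `ε` run over
`(0, 1]` gives `λ_{d,i} ≤ (C d^q / i)^{2/p}` as soon as `i > C d^q`, so the tail starting at
`⌈(1 + C) d^q⌉` is dominated termwise by `(C d^q)^{2τ/p} i^{-2τ/p}`, a zeta series since `2τ/p > 1`.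

(ii) If some `λ_{d,i}` exceeds `ε²` then so does `λ_{d,1}`, hence `ε ≤ min(√λ_{d,1}, 1)` and the
indices below the cut-off `f(d)` number at most `C ε^{-p} d^q`. Beyond the cut-off, Markov's
inequality bounds the count by `ε^{-2τ} ∑_{i ≥ f(d)} λ_{d,i}^τ ≤ C_τ^τ ε^{-2τ} d^{rτ}`.
-/

lemma zetaSum_lt_top {s : ℝ} (hs : 1 < s) : zetaSum s < ∞ := by
  have hsum : Summable fun n : ℕ => ((n + 1 : ℕ) : ℝ) ^ (-s) :=
    (summable_nat_add_iff 1).2 (Real.summable_nat_rpow.2 (by linarith))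
  have hterm (n : ℕ) : ((n : ℝ≥0∞) + 1) ^ (-s) = ENNReal.ofReal (((n + 1 : ℕ) : ℝ) ^ (-s)) := by
    rw [← ENNReal.ofReal_rpow_of_pos (by positivity), ENNReal.ofReal_natCast, Nat.cast_succ]
  simp_rw [zetaSum, hterm, ← ENNReal.ofReal_tsum_of_nonneg (fun n => by positivity) hsum]
  exact ENNReal.ofReal_lt_top

lemma tsum_tail_natCast_rpow_neg_le_zetaSum {N : ℕ} (hN : 1 ≤ N) (s : ℝ) :
    ∑' i : {i : ℕ // N ≤ i}, (i.1 : ℝ≥0∞) ^ (-s) ≤ zetaSum s := by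
  have hinj : Function.Injective fun i : {i : ℕ // N ≤ i} => i.1 - 1 := by
    rintro ⟨a, ha⟩ ⟨b, hb⟩ (hab : a - 1 = b - 1)
    exact Subtype.ext (by dsimp only; omega)
  refine le_of_eq_of_le (tsum_congr fun i => ?_)
    (ENNReal.tsum_comp_le_tsum_of_injective hinj fun n : ℕ => ((n : ℝ≥0∞) + 1) ^ (-s))
  have hi : i.1 - 1 + 1 = i.1 := by have := i.2; omega
  rw [← Nat.cast_add_one, hi]

lemma le_ncard_of_lt_of_antitoneOn {f : ℕ → ℝ} (hf : AntitoneOn f (Set.Ici 1)) {t : ℝ} {i : ℕ}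
    (hfin : {j : ℕ | 1 ≤ j ∧ t < f j}.Finite) (hi : t < f i) :
    i ≤ {j : ℕ | 1 ≤ j ∧ t < f j}.ncard := by
  have hsub : (Finset.Icc 1 i : Set ℕ) ⊆ {j : ℕ | 1 ≤ j ∧ t < f j} := fun j hj => by
    obtain ⟨hj1, hji⟩ := Finset.mem_Icc.1 hj
    exact ⟨hj1, hi.trans_le (hf hj1 (Set.mem_Ici.2 (hj1.trans hji)) hji)⟩
  simpa using Set.ncard_le_ncard hsub hfin

lemma le_sq_of_forall_le {x b : ℝ} (hb0 : 0 ≤ b) (hb1 : b < 1)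
    (h : ∀ ε : ℝ, 0 < ε → ε ≤ 1 → ε ^ 2 < x → ε ≤ b) : x ≤ b ^ 2 := by
  by_contra! hx
  obtain ⟨ε, hbε, hε⟩ := exists_between (lt_min hb1 ((Real.lt_sqrt hb0).2 hx))
  have hε0 : 0 < ε := hb0.trans_lt hbε
  have hεx : ε ^ 2 < x := (Real.lt_sqrt hε0.le).1 (hε.trans_le (min_le_right _ _))
  exact (h ε hε0 ((hε.trans_le (min_le_left _ _)).le) hεx).not_gt hbε

lemma le_div_rpow_of_ncard_le {f : ℕ → ℝ} (hf : AntitoneOn f (Set.Ici 1)) {K p : ℝ}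
    (hK : 0 ≤ K) (hp : 0 < p)
    (h : ∀ ε : ℝ, 0 < ε → ε ≤ 1 → {j : ℕ | 1 ≤ j ∧ ε ^ 2 < f j}.Finite ∧
      ({j : ℕ | 1 ≤ j ∧ ε ^ 2 < f j}.ncard : ℝ) ≤ K * ε ^ (-p))
    {i : ℕ} (hi : K < i) : f i ≤ (K / i) ^ (2 / p) := by
  have hi0 : 0 < (i : ℝ) := hK.trans_lt hi
  have hKi : 0 ≤ K / i := by positivity
  have hb : ((K / i) ^ p⁻¹) ^ 2 = (K / i) ^ (2 / p) := by
    rw [← Real.rpow_natCast, ← Real.rpow_mul hKi]; ring_nf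
  rw [← hb]
  refine le_sq_of_forall_le (by positivity)
    (Real.rpow_lt_one hKi ((div_lt_one hi0).2 hi) (inv_pos.2 hp)) fun ε hε hε1 hεf => ?_
  obtain ⟨hfin, hcard⟩ := h ε hε hε1
  have hiK : (i : ℝ) ≤ K * (ε ^ p)⁻¹ := by
    rw [← Real.rpow_neg hε.le]
    exact (Nat.cast_le.2 (le_ncard_of_lt_of_antitoneOn hf hfin hεf)).trans hcard
  rw [Real.le_rpow_inv_iff_of_pos hε.le hKi hp, le_div_iff₀ hi0]
  calc ε ^ p * i ≤ ε ^ p * (K * (ε ^ p)⁻¹) := by gcongr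
    _ = K := by field_simp

lemma tsum_tail_rpow_le {f : ℕ → ℝ} {K p τ : ℝ} {N : ℕ} (hN : 1 ≤ N) (hK : 0 ≤ K) (hp : 0 < p)
    (hτ : 0 < τ) (hf : ∀ i, N ≤ i → f i ≤ (K / i) ^ (2 / p)) :
    (∑' i : {i : ℕ // N ≤ i}, ENNReal.ofReal (f i) ^ τ) ^ (1 / τ) ≤
      ENNReal.ofReal K ^ (2 / p) * zetaSum (2 * τ / p) ^ (1 / τ) := by
  have hterm (i : {i : ℕ // N ≤ i}) : ENNReal.ofReal (f i) ^ τ ≤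
      ENNReal.ofReal K ^ (2 * τ / p) * (i.1 : ℝ≥0∞) ^ (-(2 * τ / p)) := by
    have hi0 : 0 < (i.1 : ℝ) := by exact_mod_cast hN.trans i.2
    calc ENNReal.ofReal (f i) ^ τ ≤ ENNReal.ofReal ((K / i) ^ (2 / p)) ^ τ := by
          gcongr; exact hf i i.2
      _ = (ENNReal.ofReal K / i.1) ^ (2 * τ / p) := by
          rw [← ENNReal.ofReal_rpow_of_nonneg (by positivity) (by positivity), ← ENNReal.rpow_mul,
            ENNReal.ofReal_div_of_pos hi0, ENNReal.ofReal_natCast]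
          ring_nf
      _ = _ := by
          rw [ENNReal.div_rpow_of_nonneg _ _ (by positivity), div_eq_mul_inv, ENNReal.rpow_neg]
  have hsum : ∑' i : {i : ℕ // N ≤ i}, ENNReal.ofReal (f i) ^ τ ≤
      ENNReal.ofReal K ^ (2 * τ / p) * zetaSum (2 * τ / p) := by
    grw [ENNReal.tsum_le_tsum hterm, ENNReal.tsum_mul_left,
      tsum_tail_natCast_rpow_neg_le_zetaSum hN]
  grw [hsum, ENNReal.mul_rpow_of_nonneg _ _ (by positivity), ← ENNReal.rpow_mul,
    show 2 * τ / p * (1 / τ) = 2 / p by field_simp]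

lemma natCast_rpow_neg_mul_ofReal_mul_rpow {d : ℕ} (hd : d ≠ 0) {C q b : ℝ} (hC : 0 ≤ C)
    (hb : 0 ≤ b) :
    (d : ℝ≥0∞) ^ (-(q * b)) * ENNReal.ofReal (C * (d : ℝ) ^ q) ^ b = ENNReal.ofReal C ^ b := by
  have hd' : (d : ℝ≥0∞) ≠ 0 := by exact_mod_cast hd
  rw [ENNReal.ofReal_mul hC, ← ENNReal.ofReal_rpow_of_pos (by positivity), ENNReal.ofReal_natCast,
    ENNReal.mul_rpow_of_nonneg _ _ hb, ← ENNReal.rpow_mul, mul_left_comm,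
    ← ENNReal.rpow_add _ _ hd' (ENNReal.natCast_ne_top d), neg_add_cancel, ENNReal.rpow_zero,
    mul_one]

lemma ncard_le_of_tsum_tail_le {f : ℕ → ℝ} {N : ℕ} {t τ T : ℝ} (ht : 0 < t) (hτ : 0 < τ)
    (hT : 0 ≤ T) (hsum : ∑' i : {i : ℕ // N ≤ i}, ENNReal.ofReal (f i) ^ τ ≤ ENNReal.ofReal T) :
    {i : ℕ | 1 ≤ i ∧ t < f i}.Finite ∧
      ({i : ℕ | 1 ≤ i ∧ t < f i}.ncard : ℝ) ≤ (N - 1 : ℕ) + T / t ^ τ := by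
  have hc : ENNReal.ofReal (t ^ τ) ≠ 0 := (ENNReal.ofReal_pos.2 (by positivity)).ne'
  obtain ⟨hfin, hcard⟩ :=
    ENNReal.finset_card_const_le_le_of_tsum_le ENNReal.ofReal_ne_top hsum hc
  set A := {i : {i : ℕ // N ≤ i} | ENNReal.ofReal (t ^ τ) ≤ ENNReal.ofReal (f i) ^ τ}
  have hsub : {i : ℕ | 1 ≤ i ∧ t < f i} ⊆ (Finset.Ico 1 N : Set ℕ) ∪ Subtype.val '' A := by
    rintro i ⟨hi1, hit⟩
    rcases lt_or_ge i N with hiN | hiN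
    · exact Or.inl (Finset.mem_coe.2 (Finset.mem_Ico.2 ⟨hi1, hiN⟩))
    · refine Or.inr ⟨⟨i, hiN⟩, ?_, rfl⟩
      change ENNReal.ofReal (t ^ τ) ≤ ENNReal.ofReal (f i) ^ τ
      rw [ENNReal.ofReal_rpow_of_nonneg (ht.trans hit).le hτ.le]
      exact ENNReal.ofReal_le_ofReal (Real.rpow_le_rpow ht.le hit.le hτ.le)
  have hfinU : ((Finset.Ico 1 N : Set ℕ) ∪ Subtype.val '' A).Finite :=
    (Finset.finite_toSet _).union (hfin.image _)
  refine ⟨hfinU.subset hsub, ?_⟩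
  have hA : ((Subtype.val '' A).ncard : ℝ) ≤ T / t ^ τ := by
    rw [Set.ncard_image_of_injective _ Subtype.val_injective, Set.ncard_eq_toFinset_card _ hfin]
    have := ENNReal.toReal_mono (ENNReal.div_ne_top ENNReal.ofReal_ne_top hc) hcard
    rwa [ENNReal.toReal_div, ENNReal.toReal_ofReal hT, ENNReal.toReal_ofReal (by positivity),
      ENNReal.toReal_natCast] at this
  calc ({i : ℕ | 1 ≤ i ∧ t < f i}.ncard : ℝ)
      ≤ (((Finset.Ico 1 N : Set ℕ) ∪ Subtype.val '' A).ncard : ℝ) := by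
        exact_mod_cast Set.ncard_le_ncard hsub hfinU
    _ ≤ (Finset.Ico 1 N : Set ℕ).ncard + (Subtype.val '' A).ncard := by
        rw [← Nat.cast_add]; exact Nat.cast_le.2 (Set.ncard_union_le _ _)
    _ ≤ (N - 1 : ℕ) + T / t ^ τ := by
        rw [Set.ncard_coe_finset, Nat.card_Ico]; gcongr

lemma natCast_ceil_sub_one_le {x : ℝ} (hx : 0 ≤ x) : ((⌈x⌉₊ - 1 : ℕ) : ℝ) ≤ x :=
  (Nat.cast_le.2 (Nat.sub_le_of_le_add (Nat.ceil_le_floor_add_one x))).trans (Nat.floor_le hx)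

lemma mul_rpow_neg_mul_rpow_le {ε x C a a' c c' : ℝ} (hε : 0 < ε) (hε1 : ε ≤ 1) (hx : 1 ≤ x)
    (hC : 0 ≤ C) (ha : a ≤ a') (hc : c ≤ c') :
    C * ε ^ (-a) * x ^ c ≤ C * ε ^ (-a') * x ^ c' := by
  have hεa : ε ^ (-a) ≤ ε ^ (-a') := Real.rpow_le_rpow_of_exponent_ge hε hε1 (neg_le_neg ha)
  have hxc : x ^ c ≤ x ^ c' := Real.rpow_le_rpow_of_exponent_le hx hc
  exact mul_le_mul (mul_le_mul_of_nonneg_left hεa hC) hxc (by positivity) (by positivity)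

lemma tsum_tail_rpow_le_of_ncard_le {f : ℕ → ℝ} (hf : AntitoneOn f (Set.Ici 1)) {C p q τ : ℝ}
    (hC : 0 < C) (hp : 0 < p) (hτ : 0 < τ) {d : ℕ} (hd : d ≠ 0)
    (h : ∀ ε : ℝ, 0 < ε → ε ≤ 1 → {i : ℕ | 1 ≤ i ∧ ε ^ 2 < f i}.Finite ∧
      ({i : ℕ | 1 ≤ i ∧ ε ^ 2 < f i}.ncard : ℝ) ≤ C * ε ^ (-p) * (d : ℝ) ^ q) :
    (d : ℝ≥0∞) ^ (-(2 * q / p)) *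
        (∑' i : {i : ℕ // ⌈(1 + C) * (d : ℝ) ^ q⌉₊ ≤ i}, ENNReal.ofReal (f i) ^ τ) ^ (1 / τ) ≤
      ENNReal.ofReal C ^ (2 / p) * zetaSum (2 * τ / p) ^ (1 / τ) := by
  have hdq : 0 < (d : ℝ) ^ q := by positivity
  have hdecay (i : ℕ) (hi : ⌈(1 + C) * (d : ℝ) ^ q⌉₊ ≤ i) :
      f i ≤ (C * (d : ℝ) ^ q / i) ^ (2 / p) :=
    le_div_rpow_of_ncard_le hf (by positivity) hp
      (fun ε hε hε1 => by simpa only [mul_right_comm] using h ε hε hε1)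
      (by nlinarith [Nat.ceil_le.1 hi])
  grw [tsum_tail_rpow_le (Nat.one_le_ceil_iff.2 (by positivity)) (by positivity) hp hτ hdecay,
    ← mul_assoc, show 2 * q / p = q * (2 / p) by ring,
    natCast_rpow_neg_mul_ofReal_mul_rpow hd hC.le (by positivity)]

lemma tsum_le_ofReal_of_natCast_rpow_neg_mul_le {a K : ℝ≥0∞} {d : ℕ} (hd : d ≠ 0) {r τ : ℝ}
    (hτ : 0 < τ) (hK : K ≠ ∞) (h : (d : ℝ≥0∞) ^ (-r) * a ^ (1 / τ) ≤ K) :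
    a ≤ ENNReal.ofReal (K.toReal ^ τ * (d : ℝ) ^ (r * τ)) := by
  have hd' : (d : ℝ≥0∞) ≠ 0 := by exact_mod_cast hd
  rw [ENNReal.rpow_neg, ENNReal.inv_mul_le_iff (by positivity) (by finiteness), one_div,
    ENNReal.rpow_inv_le_iff hτ] at h
  convert h using 1
  rw [ENNReal.ofReal_mul (by positivity), ← ENNReal.ofReal_rpow_of_nonneg (by positivity) hτ.le,
    ENNReal.ofReal_toReal hK, ← ENNReal.ofReal_rpow_of_pos (by positivity),
    ENNReal.ofReal_natCast, ENNReal.mul_rpow_of_nonneg _ _ hτ.le, ← ENNReal.rpow_mul, mul_comm]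

lemma ncard_le_of_tsum_tail_le_ofReal {f : ℕ → ℝ} (hf : AntitoneOn f (Set.Ici 1))
    {C K p q r τ ε : ℝ} (hC : 0 < C) (hK : 0 ≤ K) (hp : 0 ≤ p) (hτ : 0 < τ) {d : ℕ} (hd : 1 ≤ d)
    (htail : ∑' i : {i : ℕ // ⌈C * (min (Real.sqrt (f 1)) 1) ^ (-p) * (d : ℝ) ^ q⌉₊ ≤ i},
      ENNReal.ofReal (f i) ^ τ ≤ ENNReal.ofReal (K * (d : ℝ) ^ (r * τ)))
    (hε : 0 < ε) (hε1 : ε ≤ 1) :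
    {i : ℕ | 1 ≤ i ∧ ε ^ 2 < f i}.Finite ∧
      ({i : ℕ | 1 ≤ i ∧ ε ^ 2 < f i}.ncard : ℝ) ≤
        (C + K) * ε ^ (-(max p (2 * τ))) * (d : ℝ) ^ (max q (r * τ)) := by
  set S := {i : ℕ | 1 ≤ i ∧ ε ^ 2 < f i}
  set N := ⌈C * (min (Real.sqrt (f 1)) 1) ^ (-p) * (d : ℝ) ^ q⌉₊
  obtain ⟨hfin, hcard⟩ := ncard_le_of_tsum_tail_le (pow_pos hε 2) hτ (by positivity) htail
  refine ⟨hfin, ?_⟩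
  rcases S.eq_empty_or_nonempty with hS | ⟨i, hi1, hiε⟩
  · rw [hS, Set.ncard_empty, Nat.cast_zero]
    positivity
  have hεm : ε ≤ min (Real.sqrt (f 1)) 1 :=
    le_min (Real.le_sqrt_of_sq_le (hiε.trans_le (hf Set.self_mem_Ici hi1 hi1)).le) hε1
  have hN : ((N - 1 : ℕ) : ℝ) ≤ C * ε ^ (-p) * (d : ℝ) ^ q := by
    refine (natCast_ceil_sub_one_le (by positivity)).trans ?_
    have hmε := Real.rpow_le_rpow_of_nonpos hε hεm (neg_nonpos.2 hp)
    exact mul_le_mul_of_nonneg_right (mul_le_mul_of_nonneg_left hmε hC.le) (by positivity)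
  have hεpow : (ε ^ 2) ^ τ = ε ^ (2 * τ) := by
    rw [← Real.rpow_natCast, ← Real.rpow_mul hε.le, Nat.cast_ofNat]
  have hdR : (1 : ℝ) ≤ d := by exact_mod_cast hd
  calc (S.ncard : ℝ) ≤ ((N - 1 : ℕ) : ℝ) + K * ε ^ (-(2 * τ)) * (d : ℝ) ^ (r * τ) := by
        rw [Real.rpow_neg hε.le, ← hεpow]; convert hcard using 2; ring
    _ ≤ C * ε ^ (-(max p (2 * τ))) * (d : ℝ) ^ (max q (r * τ)) +
        K * ε ^ (-(max p (2 * τ))) * (d : ℝ) ^ (max q (r * τ)) :=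
      add_le_add
        (hN.trans (mul_rpow_neg_mul_rpow_le hε hε1 hdR hC.le (le_max_left _ _) (le_max_left _ _)))
        (mul_rpow_neg_mul_rpow_le hε hε1 hdR hK (le_max_right _ _) (le_max_right _ _))
    _ = _ := by ring

theorem stmt_2_general
    (Λ : ℕ → ℕ → ℝ)
    (hmono : ∀ d i j : ℕ, 1 ≤ i → i ≤ j → Λ d j ≤ Λ d i) :
    -- (i) polynomial tractability implies uniform summability of the tails
    (∀ C p q : ℝ, 0 < C → 0 < p → 0 ≤ q →
      (∀ d : ℕ, 1 ≤ d → ∀ ε : ℝ, 0 < ε → ε ≤ 1 →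
        {i : ℕ | 1 ≤ i ∧ ε ^ 2 < Λ d i}.Finite ∧
        ({i : ℕ | 1 ≤ i ∧ ε ^ 2 < Λ d i}.ncard : ℝ) ≤ C * ε ^ (-p) * (d : ℝ) ^ q) →
      ∀ τ : ℝ, p / 2 < τ →
        (∀ d : ℕ, 1 ≤ d →
          ((d : ℝ≥0∞) ^ (-(2 * q / p))) *
            (∑' i : {i : ℕ // ⌈(1 + C) * (d : ℝ) ^ q⌉₊ ≤ i},
              ENNReal.ofReal (Λ d i.1) ^ τ) ^ (1 / τ)
          ≤ ENNReal.ofReal C ^ (2 / p) * zetaSum (2 * τ / p) ^ (1 / τ)) ∧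
        ENNReal.ofReal C ^ (2 / p) * zetaSum (2 * τ / p) ^ (1 / τ) < ∞) ∧
    -- (ii) tail summability (with cut-offs depending on the initial error) implies
    -- polynomial tractability
    (∀ r τ C p q : ℝ, 0 ≤ r → 0 < τ → 0 < C → 0 ≤ p → 0 ≤ q →
      ∀ Cτ : ℝ≥0∞,
        Cτ = (⨆ d : {d : ℕ // 1 ≤ d},
          ((d.1 : ℝ≥0∞) ^ (-r)) *
            (∑' i : {i : ℕ //
                ⌈C * (min (Real.sqrt (Λ d.1 1)) 1) ^ (-p) * (d.1 : ℝ) ^ q⌉₊ ≤ i},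
              ENNReal.ofReal (Λ d.1 i.1) ^ τ) ^ (1 / τ)) →
        Cτ ≠ ∞ →
        ∀ d : ℕ, 1 ≤ d → ∀ ε : ℝ, 0 < ε → ε ≤ 1 →
          {i : ℕ | 1 ≤ i ∧ ε ^ 2 < Λ d i}.Finite ∧
          ({i : ℕ | 1 ≤ i ∧ ε ^ 2 < Λ d i}.ncard : ℝ) ≤
            (C + Cτ.toReal ^ τ) * ε ^ (-(max p (2 * τ))) * (d : ℝ) ^ (max q (r * τ))) := by
  have hanti (d : ℕ) : AntitoneOn (Λ d) (Set.Ici 1) := fun i hi j _ hij => hmono d i j hi hij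
  refine ⟨fun C p q hC hp hq h τ hτ => ?_,
    fun r τ C p q _ hτ hC hp hq Cτ hCτ hCτ_top d hd ε hε hε1 => ?_⟩
  · have hτ0 : 0 < τ := by linarith
    have hs : 1 < 2 * τ / p := by rw [lt_div_iff₀ hp]; linarith
    exact ⟨fun d hd => tsum_tail_rpow_le_of_ncard_le (hanti d) hC hp hτ0 (by omega) (h d hd),
      ENNReal.mul_lt_top (ENNReal.rpow_lt_top_of_nonneg (by positivity) ENNReal.ofReal_ne_top)
        (ENNReal.rpow_lt_top_of_nonneg (one_div_pos.2 hτ0).le (zetaSum_lt_top hs).ne)⟩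
  · have htail := tsum_le_ofReal_of_natCast_rpow_neg_mul_le (d := d)
      (Nat.one_le_iff_ne_zero.1 hd) hτ hCτ_top (by rw [hCτ]; exact le_iSup_of_le ⟨d, hd⟩ le_rfl)
    exact ncard_le_of_tsum_tail_le_ofReal (hanti d) hC (by positivity) hp hτ hd htail hε hε1

/-- A version of Theorem 5.1 of Novak–Woźniakowski (absolute error criterion) not
assuming that the initial error equals one.  `Λ d i` is the `i`-th largest eigenvalue of
`T_d† T_d`; `#{i : λ_{d,i} > ε²}` is the information complexity `n(ε,d)`. -/
theorem stmt_2
    (Λ : ℕ → ℕ → ℝ)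
    (hnn : ∀ d i : ℕ, 0 ≤ Λ d i)
    (hmono : ∀ d i j : ℕ, 1 ≤ i → i ≤ j → Λ d j ≤ Λ d i) :
    -- (i) polynomial tractability implies uniform summability of the tails
    (∀ C p q : ℝ, 0 < C → 0 < p → 0 ≤ q →
      (∀ d : ℕ, 1 ≤ d → ∀ ε : ℝ, 0 < ε → ε ≤ 1 →
        {i : ℕ | 1 ≤ i ∧ ε ^ 2 < Λ d i}.Finite ∧
        ({i : ℕ | 1 ≤ i ∧ ε ^ 2 < Λ d i}.ncard : ℝ) ≤ C * ε ^ (-p) * (d : ℝ) ^ q) →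
      ∀ τ : ℝ, p / 2 < τ →
        (∀ d : ℕ, 1 ≤ d →
          ((d : ℝ≥0∞) ^ (-(2 * q / p))) *
            (∑' i : {i : ℕ // ⌈(1 + C) * (d : ℝ) ^ q⌉₊ ≤ i},
              ENNReal.ofReal (Λ d i.1) ^ τ) ^ (1 / τ)
          ≤ ENNReal.ofReal C ^ (2 / p) * zetaSum (2 * τ / p) ^ (1 / τ)) ∧
        ENNReal.ofReal C ^ (2 / p) * zetaSum (2 * τ / p) ^ (1 / τ) < ∞) ∧
    -- (ii) tail summability (with cut-offs depending on the initial error) implies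
    -- polynomial tractability
    (∀ r τ C p q : ℝ, 0 ≤ r → 0 < τ → 0 < C → 0 ≤ p → 0 ≤ q →
      ∀ Cτ : ℝ≥0∞,
        Cτ = (⨆ d : {d : ℕ // 1 ≤ d},
          ((d.1 : ℝ≥0∞) ^ (-r)) *
            (∑' i : {i : ℕ //
                ⌈C * (min (Real.sqrt (Λ d.1 1)) 1) ^ (-p) * (d.1 : ℝ) ^ q⌉₊ ≤ i},
              ENNReal.ofReal (Λ d.1 i.1) ^ τ) ^ (1 / τ)) →
        Cτ ≠ ∞ →
        ∀ d : ℕ, 1 ≤ d → ∀ ε : ℝ, 0 < ε → ε ≤ 1 →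
          {i : ℕ | 1 ≤ i ∧ ε ^ 2 < Λ d i}.Finite ∧
          ({i : ℕ | 1 ≤ i ∧ ε ^ 2 < Λ d i}.ncard : ℝ) ≤
            (C + Cτ.toReal ^ τ) * ε ^ (-(max p (2 * τ))) * (d : ℝ) ^ (max q (r * τ))) :=
  stmt_2_general Λ hmono
end
end

section
/- Let λ = (λ_m)_{m≥1} be a nonincreasing sequence of nonnegative reals with λ_2 > 0, let 1 ≤ a_d ≤ d for each d ≥ 1, and let ∇_d be either {k ∈ ℕ^d : k_1 ≤ … ≤ k_{a_d}} (symmetric case) or {k ∈ ℕ^d : k_1 < … < k_{a_d}} (antisymmetric case). Let Λ_d denote the maximum of ∏_{l=1}^d λ_{k_l} over k ∈ ∇_d. Suppose there exist constants C, p > 0 and q ≥ 0 such that for all d ∈ ℕ and all ε ∈ (0,1] the set {k ∈ ∇_d : ∏_{l=1}^d λ_{k_l} > ε²} is finite with at most C·ε^{−p}·d^q elements (polynomial tractability). Then: (i) Σ_{m=1}^∞ λ_m^τ < ∞ for every τ > p/2; (ii) for every τ > p/2 and every d ∈ ℕ with Λ_d > 0, one has Λ_d^{−τ} · Σ_{k∈∇_d}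 (∏_{l=1}^d λ_{k_l})^τ ≤ (1+C)·d^q + C^{2τ/p} · ζ(2τ/p) · (d^{2q/p} / Λ_d)^τ, where ζ is the Riemann zeta function. -/
/-
Rank the indices of weight in `(0, 1]` by decreasing weight. The index of rank `r` has weight
`x`, and every `ε` with `ε² < x` sees at least `r` indices above level `ε²`, so
`r ≤ C ε^{-p} d^q`; letting `ε²` increase to `x` gives `x ≤ (C d^q / r)^{2/p}`. Hence the
`τ`-th powers of these weights are dominated termwise by the zeta series
`(C d^q)^{2τ/p} ∑ r^{-2τ/p}`, while the at most `C d^q` indices of weight `> 1` contribute at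
most `Λ_d^τ` each. In dimension one the indices are already ranked, so `λ_n ≤ (C/n)^{2/p}` for
`n > C`, which gives `λ ∈ ℓ_τ`.
-/

open scoped ENNReal

noncomputable section

/-- Multi-indices in `ℕ^d` (entries `≥ 1`) that are nondecreasing along the first `a`
coordinates (the symmetric index set `∇_d`). -/
def symIdx (a d : ℕ) : Set (Fin d → ℕ) :=
  {k | (∀ i, 1 ≤ k i) ∧ ∀ i j : Fin d, i ≤ j → (j : ℕ) < a → k i ≤ k j}

/-- Multi-indices in `ℕ^d` (entries `≥ 1`) that are strictly increasing along the first
`a` coordinates (the antisymmetric index set `∇_d`). -/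
def asymIdx (a d : ℕ) : Set (Fin d → ℕ) :=
  {k | (∀ i, 1 ≤ k i) ∧ ∀ i j : Fin d, i < j → (j : ℕ) < a → k i < k j}

open Set

lemma le_div_rpow_of_forall_sq_lt {M p x : ℝ} {n : ℕ} (hM : 0 ≤ M) (hp : 0 < p) (hn : 0 < n)
    (hx : x ≤ 1) (h : ∀ ε : ℝ, 0 < ε → ε ≤ 1 → ε ^ 2 < x → (n : ℝ) ≤ M * ε ^ (-p)) :
    x ≤ (M / n) ^ (2 / p) := by
  refine le_of_forall_lt_imp_le_of_dense fun t ht => ?_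
  rcases le_or_gt t 0 with ht0 | ht0
  · exact ht0.trans (by positivity)
  have hcount := h √t (Real.sqrt_pos.2 ht0) (Real.sqrt_le_one.2 (by linarith))
    (by rwa [Real.sq_sqrt ht0.le])
  have hsqrt : √t ^ (-p) = (t ^ (p / 2))⁻¹ := by
    rw [Real.sqrt_eq_rpow, ← Real.rpow_mul ht0.le, ← Real.rpow_neg ht0.le]
    ring_nf
  rw [hsqrt, ← div_eq_mul_inv, le_div_iff₀ (by positivity)] at hcount
  rw [show 2 / p = (p / 2)⁻¹ by ring, Real.le_rpow_inv_iff_of_pos ht0.le (by positivity)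
    (by positivity), le_div_iff₀ (by positivity)]
  linarith

lemma div_rpow_rpow_eq_mul_rpow_neg {M n : ℝ} (hM : 0 ≤ M) (hn : 0 < n) (p τ : ℝ) :
    ((M / n) ^ (2 / p)) ^ τ = M ^ (2 * τ / p) * n ^ (-(2 * τ / p)) := by
  rw [← Real.rpow_mul (by positivity), Real.div_rpow hM hn.le, Real.rpow_neg hn.le,
    div_eq_mul_inv, show 2 / p * τ = 2 * τ / p by ring]

lemma injOn_ncard_setOf_le {ι β : Type*} [LinearOrder β] {f : ι → β}
    (hf : Function.Injective f) {B : Set ι} (hfin : ∀ k ∈ B, {k' | k' ∈ B ∧ f k ≤ f k'}.Finite) :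
    InjOn (fun k => {k' | k' ∈ B ∧ f k ≤ f k'}.ncard) B := by
  have hlt : ∀ i ∈ B, ∀ j ∈ B, f i < f j →
      {k' | k' ∈ B ∧ f j ≤ f k'}.ncard < {k' | k' ∈ B ∧ f i ≤ f k'}.ncard := fun i hi j _ hij =>
    ncard_lt_ncard ⟨fun k hk => ⟨hk.1, hij.le.trans hk.2⟩,
      fun hsub => (hsub ⟨hi, le_rfl⟩).2.not_gt hij⟩ (hfin i hi)
  intro i hi j hj hij
  by_contra hne
  rcases (hf.ne hne).lt_or_gt with h | h
  · exact (hlt i hi j hj h).ne' hij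
  · exact (hlt j hj i hi h).ne hij

lemma exists_injOn_rank {ι : Type*} [Countable ι] {B : Set ι} {x : ι → ℝ}
    (hfin : ∀ k ∈ B, {k' | k' ∈ B ∧ x k ≤ x k'}.Finite) :
    ∃ r : ι → ℕ, InjOn r B ∧ ∀ k ∈ B, 0 < r k ∧ r k ≤ {k' | k' ∈ B ∧ x k ≤ x k'}.ncard := by
  obtain ⟨e, he⟩ := exists_injective_nat ι
  let f : ι → ℝ ×ₗ ℕ := fun k => toLex (x k, e k)
  have hf : Function.Injective f := fun i j h => he (Prod.ext_iff.1 (toLex.injective h)).2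
  have hsub : ∀ k, {k' | k' ∈ B ∧ f k ≤ f k'} ⊆ {k' | k' ∈ B ∧ x k ≤ x k'} :=
    fun k k' hk' => ⟨hk'.1, (Prod.Lex.le_iff.1 hk'.2).elim le_of_lt fun h => h.1.le⟩
  refine ⟨fun k => {k' | k' ∈ B ∧ f k ≤ f k'}.ncard,
    injOn_ncard_setOf_le hf fun k hk => (hfin k hk).subset (hsub k),
    fun k hk => ⟨?_, ncard_le_ncard (hsub k) (hfin k hk)⟩⟩
  exact (ncard_pos ((hfin k hk).subset (hsub k))).2 ⟨k, hk, le_rfl⟩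

lemma tsum_natCast_rpow_neg_le_zetaSum {ι : Type*} {B : Set ι} {r : ι → ℕ} (hr : InjOn r B)
    (hpos : ∀ k ∈ B, 0 < r k) (s : ℝ) :
    ∑' k : B, (r k : ℝ≥0∞) ^ (-s) ≤ zetaSum s := by
  have hinj : Function.Injective fun k : B => r k - 1 := fun i j h =>
    Subtype.ext (hr i.2 j.2 (by have := hpos i i.2; have := hpos j j.2; simp only at h; omega))
  refine le_of_eq_of_le (tsum_congr fun k => ?_)
    (ENNReal.tsum_comp_le_tsum_of_injective hinj fun n => ((n : ℝ≥0∞) + 1) ^ (-s))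
  rw [← Nat.cast_add_one, Nat.sub_add_cancel (hpos k k.2)]

/-- The tractability bound `n(ε, d) ≤ C ε^{-p} d^q`, with `M = C d^q`. -/
def SuperlevelCountBound {ι : Type*} (N : Set ι) (x : ι → ℝ) (M p : ℝ) : Prop :=
  ∀ ε : ℝ, 0 < ε → ε ≤ 1 → {k | k ∈ N ∧ ε ^ 2 < x k}.Finite ∧
    ({k | k ∈ N ∧ ε ^ 2 < x k}.ncard : ℝ) ≤ M * ε ^ (-p)

namespace SuperlevelCountBound

variable {ι : Type*} {N : Set ι} {x : ι → ℝ} {M p : ℝ}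

lemma finite_and_ncard_setOf_le (h : SuperlevelCountBound N x M p) {B : Set ι} (hB : B ⊆ N)
    {k : ι} {ε : ℝ} (hε0 : 0 < ε) (hε1 : ε ≤ 1) (hεk : ε ^ 2 < x k) :
    {k' | k' ∈ B ∧ x k ≤ x k'}.Finite ∧
      ({k' | k' ∈ B ∧ x k ≤ x k'}.ncard : ℝ) ≤ M * ε ^ (-p) := by
  obtain ⟨hfin, hcard⟩ := h ε hε0 hε1
  have hsub : {k' | k' ∈ B ∧ x k ≤ x k'} ⊆ {k | k ∈ N ∧ ε ^ 2 < x k} :=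
    fun k' hk' => ⟨hB hk'.1, hεk.trans_le hk'.2⟩
  exact ⟨hfin.subset hsub, le_trans (by exact_mod_cast ncard_le_ncard hsub hfin) hcard⟩

lemma tsum_rpow_le_of_one_lt (h : SuperlevelCountBound N x M p) {L τ : ℝ}
    (hL : ∀ k ∈ N, x k ≤ L) (hτ : 0 ≤ τ) :
    ∑' k : {k | k ∈ N ∧ 1 < x k}, ENNReal.ofReal (x k) ^ τ ≤
      ENNReal.ofReal M * ENNReal.ofReal L ^ τ := by
  obtain ⟨hfin, hcard⟩ := h 1 one_pos le_rfl
  simp only [one_pow, Real.one_rpow, mul_one] at hfin hcard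
  calc ∑' k : {k | k ∈ N ∧ 1 < x k}, ENNReal.ofReal (x k) ^ τ
      ≤ ∑' _ : {k | k ∈ N ∧ 1 < x k}, ENNReal.ofReal L ^ τ :=
        ENNReal.tsum_le_tsum fun k =>
          ENNReal.rpow_le_rpow (ENNReal.ofReal_le_ofReal (hL k k.2.1)) hτ
    _ = ({k | k ∈ N ∧ 1 < x k}.ncard : ℝ≥0∞) * ENNReal.ofReal L ^ τ := by
        rw [ENNReal.tsum_const, ENat.card_coe_set_eq, ← hfin.cast_ncard_eq]
        rfl
    _ ≤ ENNReal.ofReal M * ENNReal.ofReal L ^ τ := by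
        gcongr
        rw [← ENNReal.ofReal_natCast]
        exact ENNReal.ofReal_le_ofReal hcard

lemma tsum_rpow_le_zetaSum [Countable ι] (h : SuperlevelCountBound N x M p) (hM : 0 ≤ M)
    (hp : 0 < p) {τ : ℝ} (hτ : 0 ≤ τ) :
    ∑' k : {k | k ∈ N ∧ 0 < x k ∧ x k ≤ 1}, ENNReal.ofReal (x k) ^ τ ≤
      ENNReal.ofReal M ^ (2 * τ / p) * zetaSum (2 * τ / p) := by
  set B := {k | k ∈ N ∧ 0 < x k ∧ x k ≤ 1}
  have hBN : B ⊆ N := fun k hk => hk.1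
  obtain ⟨r, hr, hrB⟩ := exists_injOn_rank (B := B) (x := x) fun k hk =>
    (h.finite_and_ncard_setOf_le hBN (ε := x k / 2) (by linarith [hk.2.1]) (by linarith [hk.2.2])
      (by nlinarith [hk.2.1, hk.2.2])).1
  have hxr : ∀ k ∈ B, x k ≤ (M / r k) ^ (2 / p) := fun k hk =>
    le_div_rpow_of_forall_sq_lt hM hp (hrB k hk).1 hk.2.2 fun ε hε0 hε1 hεk =>
      le_trans (by exact_mod_cast (hrB k hk).2) (h.finite_and_ncard_setOf_le hBN hε0 hε1 hεk).2
  calc ∑' k : B, ENNReal.ofReal (x k) ^ τ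
      ≤ ∑' k : B, ENNReal.ofReal M ^ (2 * τ / p) * (r k : ℝ≥0∞) ^ (-(2 * τ / p)) := by
        refine ENNReal.tsum_le_tsum fun ⟨k, hk⟩ => ?_
        have hrk : (0 : ℝ) < r k := by exact_mod_cast (hrB k hk).1
        rw [ENNReal.ofReal_rpow_of_nonneg hk.2.1.le hτ,
          ENNReal.ofReal_rpow_of_nonneg hM (by positivity), ← ENNReal.ofReal_natCast,
          ENNReal.ofReal_rpow_of_pos hrk, ← ENNReal.ofReal_mul (by positivity),
          ← div_rpow_rpow_eq_mul_rpow_neg hM hrk]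
        exact ENNReal.ofReal_le_ofReal (Real.rpow_le_rpow hk.2.1.le (hxr k hk) hτ)
    _ = ENNReal.ofReal M ^ (2 * τ / p) * ∑' k : B, (r k : ℝ≥0∞) ^ (-(2 * τ / p)) :=
        ENNReal.tsum_mul_left
    _ ≤ ENNReal.ofReal M ^ (2 * τ / p) * zetaSum (2 * τ / p) := by
        gcongr
        exact tsum_natCast_rpow_neg_le_zetaSum hr (fun k hk => (hrB k hk).1) _

lemma tsum_rpow_le [Countable ι] (h : SuperlevelCountBound N x M p) (hM : 0 ≤ M) (hp : 0 < p)
    {L τ : ℝ} (hL : ∀ k ∈ N, x k ≤ L) (hτ : 0 < τ) :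
    ∑' k : N, ENNReal.ofReal (x k) ^ τ ≤
      ENNReal.ofReal M * ENNReal.ofReal L ^ τ +
        ENNReal.ofReal M ^ (2 * τ / p) * zetaSum (2 * τ / p) := by
  set g : ι → ℝ≥0∞ := fun k => ENNReal.ofReal (x k) ^ τ
  set A := {k | k ∈ N ∧ 1 < x k}
  set B := {k | k ∈ N ∧ 0 < x k ∧ x k ≤ 1}
  have hsplit : ∀ k, N.indicator g k ≤ A.indicator g k + B.indicator g k := by
    intro k
    by_cases hk : k ∈ N
    swap
    · simp [hk]
    rcases lt_or_ge 1 (x k) with h1 | h1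
    · rw [indicator_of_mem hk, indicator_of_mem (show k ∈ A from ⟨hk, h1⟩)]
      exact le_self_add
    rcases lt_or_ge 0 (x k) with h0 | h0
    · rw [indicator_of_mem hk, indicator_of_mem (show k ∈ B from ⟨hk, h0, h1⟩)]
      exact le_add_self
    · simp [g, hk, ENNReal.ofReal_of_nonpos h0, ENNReal.zero_rpow_of_pos hτ]
  calc ∑' k : N, g k = ∑' k, N.indicator g k := tsum_subtype N g
    _ ≤ ∑' k, (A.indicator g k + B.indicator g k) := ENNReal.tsum_le_tsum hsplit
    _ = ∑' k : A, g k + ∑' k : B, g k := by rw [ENNReal.tsum_add, tsum_subtype, tsum_subtype]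
    _ ≤ _ := add_le_add (h.tsum_rpow_le_of_one_lt hL hτ.le) (h.tsum_rpow_le_zetaSum hM hp hτ.le)

end SuperlevelCountBound

lemma symIdx_one (a : ℕ) : symIdx a 1 = {k | ∀ i, 1 ≤ k i} :=
  ext fun _ => ⟨And.left, fun h => ⟨h, fun i j _ _ => Subsingleton.elim i j ▸ le_rfl⟩⟩

lemma asymIdx_one (a : ℕ) : asymIdx a 1 = {k | ∀ i, 1 ≤ k i} :=
  ext fun _ => ⟨And.left, fun h =>
    ⟨h, fun i j hij _ => absurd hij (Subsingleton.elim i j ▸ lt_irrefl i)⟩⟩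

lemma natCast_le_of_superlevelCountBound_one {Λ : ℕ → ℝ}
    (hmono : ∀ m n : ℕ, 1 ≤ m → m ≤ n → Λ n ≤ Λ m) {M p : ℝ}
    (h : SuperlevelCountBound {k : Fin 1 → ℕ | ∀ i, 1 ≤ k i} (fun k => ∏ l, Λ (k l)) M p)
    {n : ℕ} {ε : ℝ} (hε0 : 0 < ε) (hε1 : ε ≤ 1) (hεn : ε ^ 2 < Λ n) :
    (n : ℝ) ≤ M * ε ^ (-p) := by
  obtain ⟨hfin, hcard⟩ := h ε hε0 hε1
  have hsub : (fun m : ℕ => fun _ : Fin 1 => m) '' Icc 1 n ⊆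
      {k | k ∈ {k : Fin 1 → ℕ | ∀ i, 1 ≤ k i} ∧ ε ^ 2 < ∏ l, Λ (k l)} := by
    rintro _ ⟨m, hm, rfl⟩
    exact ⟨fun _ => hm.1, by simpa using hεn.trans_le (hmono m n hm.1 hm.2)⟩
  have hle := ncard_le_ncard hsub hfin
  rw [ncard_image_of_injective _ fun m m' h => congrFun h 0, ncard_Icc_nat,
    Nat.add_sub_cancel] at hle
  exact le_trans (by exact_mod_cast hle) hcard

lemma summable_rpow_of_forall_natCast_le {Λ : ℕ → ℝ} (hnn : ∀ m, 0 ≤ Λ m) {M p τ : ℝ}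
    (hM : 0 ≤ M) (hp : 0 < p) (hτ : p / 2 < τ)
    (h : ∀ n : ℕ, ∀ ε : ℝ, 0 < ε → ε ≤ 1 → ε ^ 2 < Λ n → (n : ℝ) ≤ M * ε ^ (-p)) :
    Summable fun m : ℕ => Λ (m + 1) ^ τ := by
  have htail : ∀ n : ℕ, M < n → Λ n ≤ (M / n) ^ (2 / p) := by
    intro n hMn
    have hn : 0 < n := by exact_mod_cast hM.trans_lt hMn
    refine le_div_rpow_of_forall_sq_lt hM hp hn ?_ (h n)
    by_contra! h1
    have := h n 1 one_pos le_rfl (by rwa [one_pow])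
    rw [Real.one_rpow, mul_one] at this
    linarith
  have hs : 1 < 2 * τ / p := by rw [lt_div_iff₀ hp]; linarith
  have hsum : Summable fun m : ℕ => M ^ (2 * τ / p) * ((m + 1 : ℕ) : ℝ) ^ (-(2 * τ / p)) :=
    ((summable_nat_add_iff 1).2 (Real.summable_nat_rpow.2 (by linarith))).mul_left _
  refine Summable.of_norm_bounded_eventually hsum ?_
  rw [Nat.cofinite_eq_atTop]
  filter_upwards [Filter.eventually_gt_atTop ⌈M⌉₊] with m hm
  rw [Real.norm_of_nonneg (Real.rpow_nonneg (hnn _) _),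
    ← div_rpow_rpow_eq_mul_rpow_neg hM (by positivity)]
  have hMm : M < (m + 1 : ℕ) := (Nat.lt_of_ceil_lt hm).trans (by push_cast; linarith)
  exact Real.rpow_le_rpow (hnn _) (htail _ hMm) (by linarith)

lemma ENNReal.rpow_neg_mul_le_add {L S a b : ℝ≥0∞} {τ : ℝ} (hL0 : L ≠ 0) (hLt : L ≠ ⊤)
    (h : S ≤ a * L ^ τ + b) : L ^ (-τ) * S ≤ a + b * L⁻¹ ^ τ := by
  calc L ^ (-τ) * S ≤ L ^ (-τ) * (a * L ^ τ + b) := by gcongr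
    _ = a * (L ^ (-τ) * L ^ τ) + b * L⁻¹ ^ τ := by rw [ENNReal.inv_rpow, ← ENNReal.rpow_neg]; ring
    _ = a + b * L⁻¹ ^ τ := by
        rw [← ENNReal.rpow_add _ _ hL0 hLt, neg_add_cancel, ENNReal.rpow_zero, mul_one]

lemma ofReal_mul_natCast_rpow_rpow {C : ℝ} (hC : 0 ≤ C) {d : ℕ} (hd : 0 < d) (q : ℝ) {p τ : ℝ}
    (hp : 0 < p) (hτ : 0 ≤ τ) :
    ENNReal.ofReal (C * (d : ℝ) ^ q) ^ (2 * τ / p) =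
      ENNReal.ofReal C ^ (2 * τ / p) * ((d : ℝ≥0∞) ^ (2 * q / p)) ^ τ := by
  rw [ENNReal.ofReal_mul hC, ← ENNReal.ofReal_rpow_of_pos (by exact_mod_cast hd),
    ENNReal.ofReal_natCast, ENNReal.mul_rpow_of_nonneg _ _ (by positivity), ← ENNReal.rpow_mul,
    ← ENNReal.rpow_mul]
  ring_nf

theorem stmt_3_general
    (Λ : ℕ → ℝ) (hnn : ∀ m, 0 ≤ Λ m)
    (hmono : ∀ m n : ℕ, 1 ≤ m → m ≤ n → Λ n ≤ Λ m)
    (a : ℕ → ℕ)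
    (nabla : (d : ℕ) → Set (Fin d → ℕ))
    (hnabla : (∀ d, nabla d = symIdx (a d) d) ∨ (∀ d, nabla d = asymIdx (a d) d))
    (Λd : ℕ → ℝ)
    (hΛd : ∀ d : ℕ, 1 ≤ d →
      IsGreatest ((fun k : Fin d → ℕ => ∏ l, Λ (k l)) '' nabla d) (Λd d))
    (C p q : ℝ) (hC : 0 < C) (hp : 0 < p)
    (htract : ∀ d : ℕ, 1 ≤ d → ∀ ε : ℝ, 0 < ε → ε ≤ 1 →
      {k : Fin d → ℕ | k ∈ nabla d ∧ ε ^ 2 < ∏ l, Λ (k l)}.Finite ∧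
      ({k : Fin d → ℕ | k ∈ nabla d ∧ ε ^ 2 < ∏ l, Λ (k l)}.ncard : ℝ) ≤
        C * ε ^ (-p) * (d : ℝ) ^ q) :
    (∀ τ : ℝ, p / 2 < τ → Summable (fun m : ℕ => Λ (m + 1) ^ τ)) ∧
    (∀ τ : ℝ, p / 2 < τ → ∀ d : ℕ, 1 ≤ d → 0 < Λd d →
      ENNReal.ofReal (Λd d) ^ (-τ) *
          (∑' k : nabla d, ENNReal.ofReal (∏ l, Λ (k.1 l)) ^ τ)
        ≤ ENNReal.ofReal ((1 + C) * (d : ℝ) ^ q) +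
          ENNReal.ofReal C ^ (2 * τ / p) * zetaSum (2 * τ / p) *
            ((d : ℝ≥0∞) ^ (2 * q / p) * (ENNReal.ofReal (Λd d))⁻¹) ^ τ) := by
  have hcount : ∀ d, 1 ≤ d →
      SuperlevelCountBound (nabla d) (fun k => ∏ l, Λ (k l)) (C * (d : ℝ) ^ q) p :=
    fun d hd ε hε0 hε1 => (htract d hd ε hε0 hε1).imp_right (·.trans_eq (mul_right_comm _ _ _))
  have hnabla1 : nabla 1 = {k | ∀ i, 1 ≤ k i} := by
    rcases hnabla with h | h <;> rw [h]
    exacts [symIdx_one _, asymIdx_one _]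
  have hcount1 := hcount 1 le_rfl
  rw [hnabla1, Nat.cast_one, Real.one_rpow, mul_one] at hcount1
  refine ⟨fun τ hτ => summable_rpow_of_forall_natCast_le hnn hC.le hp hτ fun _ _ hε0 hε1 hεn =>
    natCast_le_of_superlevelCountBound_one hmono hcount1 hε0 hε1 hεn, fun τ hτ d hd hL => ?_⟩
  have hτ0 : 0 < τ := (half_pos hp).trans hτ
  have hsum := (hcount d hd).tsum_rpow_le (by positivity) hp
    (fun k hk => (hΛd d hd).2 ⟨k, hk, rfl⟩) hτ0
  refine (ENNReal.rpow_neg_mul_le_add (by simpa using hL) ENNReal.ofReal_ne_top hsum).trans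
    (add_le_add (ENNReal.ofReal_le_ofReal ?_) (le_of_eq ?_))
  · exact mul_le_mul_of_nonneg_right (by linarith) (by positivity)
  · rw [ofReal_mul_natCast_rpow_rpow hC.le hd q hp hτ0.le, ENNReal.mul_rpow_of_nonneg _ _ hτ0.le]
    ring

/-- General necessary conditions: polynomial tractability of the (anti-)symmetric
tensor product problem forces `λ ∈ ℓ_τ` for all `τ > p/2` and a quantitative bound on
the normalized sum of all eigenvalues. -/
theorem stmt_3
    (Λ : ℕ → ℝ) (hnn : ∀ m, 0 ≤ Λ m)
    (hmono : ∀ m n : ℕ, 1 ≤ m → m ≤ n → Λ n ≤ Λ m) (h2 : 0 < Λ 2)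
    (a : ℕ → ℕ) (ha : ∀ d : ℕ, 1 ≤ d → 1 ≤ a d ∧ a d ≤ d)
    (nabla : (d : ℕ) → Set (Fin d → ℕ))
    (hnabla : (∀ d, nabla d = symIdx (a d) d) ∨ (∀ d, nabla d = asymIdx (a d) d))
    (Λd : ℕ → ℝ)
    (hΛd : ∀ d : ℕ, 1 ≤ d →
      IsGreatest ((fun k : Fin d → ℕ => ∏ l, Λ (k l)) '' nabla d) (Λd d))
    (C p q : ℝ) (hC : 0 < C) (hp : 0 < p) (hq : 0 ≤ q)
    (htract : ∀ d : ℕ, 1 ≤ d → ∀ ε : ℝ, 0 < ε → ε ≤ 1 →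
      {k : Fin d → ℕ | k ∈ nabla d ∧ ε ^ 2 < ∏ l, Λ (k l)}.Finite ∧
      ({k : Fin d → ℕ | k ∈ nabla d ∧ ε ^ 2 < ∏ l, Λ (k l)}.ncard : ℝ) ≤
        C * ε ^ (-p) * (d : ℝ) ^ q) :
    (∀ τ : ℝ, p / 2 < τ → Summable (fun m : ℕ => Λ (m + 1) ^ τ)) ∧
    (∀ τ : ℝ, p / 2 < τ → ∀ d : ℕ, 1 ≤ d → 0 < Λd d →
      ENNReal.ofReal (Λd d) ^ (-τ) *
          (∑' k : nabla d, ENNReal.ofReal (∏ l, Λ (k.1 l)) ^ τ)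
        ≤ ENNReal.ofReal ((1 + C) * (d : ℝ) ^ q) +
          ENNReal.ofReal C ^ (2 * τ / p) * zetaSum (2 * τ / p) *
            ((d : ℝ≥0∞) ^ (2 * q / p) * (ENNReal.ofReal (Λd d))⁻¹) ^ τ) :=
  stmt_3_general Λ hnn hmono a nabla hnabla Λd hΛd C p q hC hp htract
end
end

section
/- Let λ = (λ_m)_{m≥1} be a nonincreasing sequence of nonnegative reals with λ_2 > 0, let 1 ≤ a_d ≤ d for each d ≥ 1, b_d = d − a_d, and set ∇_d = {k ∈ ℕ^d : k_1 ≤ … ≤ k_{a_d}} (symmetric setting). Define n(ε,d) = #{k ∈ ∇_d : ∏_{l=1}^d λ_{k_l} > ε²}. (i) If there exist C, p > 0, q ≥ 0 with n(ε,d) ≤ C·ε^{−p}·d^q (the counted set being finite) for all d ∈ ℕ, ε ∈ (0,1], and if λ_1 ≥ 1, then there is a constant c > 0 with b_d ≤ c·ln(d) for all d ≥ 2. (ii) If this bound holds with q = 0 (strong polynomial tractability) and λ_1 ≥ 1, then sup_d b_d < ∞ and λ_2 < 1/λ_1. -/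
open Finset

def twoOn {d : ℕ} (S : Finset (Fin d)) : Fin d → ℕ := fun x => if x ∈ S then 2 else 1

lemma twoOn_injective {d : ℕ} : Function.Injective (twoOn (d := d)) := by
  intro S T h
  ext x
  have := congrFun h x
  by_cases hS : x ∈ S <;> by_cases hT : x ∈ T <;> simp_all [twoOn]

lemma twoOn_mem_symIdx {a d : ℕ} {S : Finset (Fin d)}
    (hS : ∀ i j : Fin d, i ≤ j → (j : ℕ) < a → i ∈ S → j ∈ S) :
    twoOn S ∈ symIdx a d := by
  refine ⟨fun i => by unfold twoOn; split <;> omega, fun i j hij hja => ?_⟩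
  unfold twoOn
  by_cases hi : i ∈ S
  · simp [hi, hS i j hij hja hi]
  · rw [if_neg hi]; split <;> omega

lemma prod_twoOn (Λ : ℕ → ℝ) {d : ℕ} (S : Finset (Fin d)) :
    ∏ x, Λ (twoOn S x) = Λ 2 ^ #S * Λ 1 ^ (d - #S) := by
  simp only [twoOn, apply_ite Λ, prod_ite, prod_const, filter_univ_mem, filter_not,
    ← compl_eq_univ_sdiff, card_compl, Fintype.card_fin]

lemma pow_le_pow_mul_choose {n k : ℕ} (h : k ≤ n) : n ^ k ≤ k ^ k * n.choose k := by
  have key : n ^ k * k.descFactorial k ≤ k ^ k * n.descFactorial k := by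
    have hk : ∀ m : ℕ, m ^ k = ∏ _i ∈ range k, m := fun m => by simp
    rw [Nat.descFactorial_eq_prod_range, Nat.descFactorial_eq_prod_range, hk n, hk k,
      ← prod_mul_distrib, ← prod_mul_distrib]
    -- factorwise `n / k ≤ (n - i) / (k - i)`
    refine prod_le_prod' fun i _ => ?_
    have : k * i ≤ n * i := Nat.mul_le_mul_right i h
    rw [Nat.mul_sub, Nat.mul_sub, Nat.mul_comm n k]
    omega
  rw [Nat.descFactorial_self, Nat.descFactorial_eq_factorial_mul_choose] at key
  nlinarith [Nat.factorial_pos k]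

/-- The set counted by `n(ε, d)`. -/
def largeIdx (Λ : ℕ → ℝ) (a d : ℕ) (ε : ℝ) : Set (Fin d → ℕ) :=
  {k | k ∈ symIdx a d ∧ ε ^ 2 < ∏ l, Λ (k l)}

section Counting

variable {Λ : ℕ → ℝ} {a d : ℕ} {ε : ℝ}

lemma card_le_ncard_largeIdx {F : Finset (Finset (Fin d))}
    (hF : ∀ S ∈ F, ∀ i j : Fin d, i ≤ j → (j : ℕ) < a → i ∈ S → j ∈ S)
    (hε : ∀ S ∈ F, ε ^ 2 < Λ 2 ^ #S * Λ 1 ^ (d - #S)) (hfin : (largeIdx Λ a d ε).Finite) :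
    #F ≤ (largeIdx Λ a d ε).ncard := by
  rw [← card_image_of_injective F twoOn_injective, ← Set.ncard_coe_finset]
  refine Set.ncard_le_ncard ?_ hfin
  intro k hk
  obtain ⟨S, hS, rfl⟩ := mem_image.mp hk
  exact ⟨twoOn_mem_symIdx (hF S hS), (prod_twoOn Λ S).symm ▸ hε S hS⟩

lemma card_filter_le_val (a d : ℕ) : #{x : Fin d | a ≤ (x : ℕ)} = d - a := by
  have := card_filter_add_card_filter_not (s := (univ : Finset (Fin d)))
    (fun x : Fin d => (x : ℕ) < a)
  simp only [not_lt, card_univ, Fintype.card_fin, Fin.card_filter_val_lt] at this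
  omega

lemma choose_le_ncard_largeIdx (h2 : 0 ≤ Λ 2) (h1 : 1 ≤ Λ 1) (j : ℕ) (hε : ε ^ 2 < Λ 2 ^ j)
    (hfin : (largeIdx Λ a d ε).Finite) : (d - a).choose j ≤ (largeIdx Λ a d ε).ncard := by
  rw [← card_filter_le_val a d, ← card_powersetCard]
  refine card_le_ncard_largeIdx (fun S hS i j hij hja hi => ?_) (fun S hS => ?_) hfin
  · have := (mem_filter.mp ((mem_powersetCard.mp hS).1 hi)).2
    omega
  · rw [(mem_powersetCard.mp hS).2]
    exact hε.trans_le (le_mul_of_one_le_right (pow_nonneg h2 j) (one_le_pow₀ h1))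

lemma card_filter_val_lt_and_sub_le (a d j : ℕ) (hja : j ≤ a) (had : a ≤ d) :
    #{x : Fin d | (x : ℕ) < a ∧ a - j ≤ (x : ℕ)} = j := by
  have := card_filter_add_card_filter_not (s := ({x : Fin d | (x : ℕ) < a} : Finset (Fin d)))
    (fun x : Fin d => (x : ℕ) < a - j)
  have hlt : ∀ x : Fin d, (x : ℕ) < a ∧ (x : ℕ) < a - j ↔ (x : ℕ) < a - j := fun x => by omega
  simp only [filter_filter, not_lt, hlt, Fin.card_filter_val_lt] at this
  omega

lemma succ_le_ncard_largeIdx (h1 : 1 ≤ Λ 1) (h21 : 1 ≤ Λ 2 * Λ 1) {J : ℕ} (hJa : J ≤ a)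
    (had : a ≤ d) (hJd : 2 * J ≤ d) (hε : ε ^ 2 < 1) (hfin : (largeIdx Λ a d ε).Finite) :
    J + 1 ≤ (largeIdx Λ a d ε).ncard := by
  set W : ℕ → Finset (Fin d) := fun j => {x | (x : ℕ) < a ∧ a - j ≤ (x : ℕ)}
  have hW : ∀ j ∈ range (J + 1), #(W j) = j := fun j hj =>
    card_filter_val_lt_and_sub_le a d j (by have := mem_range.mp hj; omega) had
  have hΛ2 : 0 ≤ Λ 2 := nonneg_of_mul_nonneg_left (by linarith) (by linarith : 0 < Λ 1)
  rw [← card_range (J + 1), ← card_image_of_injOn (f := W) fun j hj j' hj' h => by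
    rw [← hW j hj, ← hW j' hj', h]]
  refine card_le_ncard_largeIdx (fun S hS i i' hii' hi'a hi => ?_) (fun S hS => ?_) hfin
  · obtain ⟨j, -, rfl⟩ := mem_image.mp hS
    simp only [W, mem_filter, mem_univ, true_and, Fin.le_def] at hi hii' ⊢
    omega
  · obtain ⟨j, hj, rfl⟩ := mem_image.mp hS
    have hjd : j ≤ d - j := by have := mem_range.mp hj; omega
    rw [hW j hj]
    calc ε ^ 2 < 1 := hε
      _ ≤ (Λ 2 * Λ 1) ^ j := one_le_pow₀ h21
      _ = Λ 2 ^ j * Λ 1 ^ j := mul_pow _ _ _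
      _ ≤ Λ 2 ^ j * Λ 1 ^ (d - j) :=
        mul_le_mul_of_nonneg_left (pow_le_pow_right₀ h1 hjd) (pow_nonneg hΛ2 j)

end Counting

def LargeIdxBound (Λ : ℕ → ℝ) (a d : ℕ) (D p : ℝ) : Prop :=
  ∀ ε : ℝ, 0 < ε → ε ≤ 1 →
    (largeIdx Λ a d ε).Finite ∧ ((largeIdx Λ a d ε).ncard : ℝ) ≤ D * ε ^ (-p)

section Tractability

variable {Λ : ℕ → ℝ} {p : ℝ}

lemma two_pow_le_of_largeIdxBound (h2 : 0 < Λ 2) (h1 : 1 ≤ Λ 1) (hp : 0 ≤ p) {a d : ℕ} {D : ℝ}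
    (hD : LargeIdxBound Λ a d D p) {j : ℕ}
    (hj : 2 * min (Λ 2) 1 ^ (-p) * j ≤ ((d - a : ℕ) : ℝ)) : (2 : ℝ) ^ j ≤ D * 2 ^ p := by
  set μ := min (Λ 2) 1
  set R := μ ^ (-p)
  have hμ0 : 0 < μ := lt_min h2 one_pos
  have hμj : μ ^ j ≤ 1 := pow_le_one₀ hμ0.le (min_le_right _ _)
  have hR : 1 ≤ R :=
    Real.one_le_rpow_of_pos_of_le_one_of_nonpos hμ0 (min_le_right _ _) (neg_nonpos.mpr hp)
  obtain ⟨hfin, hcard⟩ := hD (μ ^ j / 2) (by positivity) (by linarith)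
  have hε : (μ ^ j / 2) ^ 2 < Λ 2 ^ j := by
    calc (μ ^ j / 2) ^ 2 < μ ^ j := by nlinarith [pow_pos hμ0 j]
      _ ≤ Λ 2 ^ j := pow_le_pow_left₀ hμ0.le (min_le_left _ _) j
  have hεp : (μ ^ j / 2) ^ (-p) = 2 ^ p * R ^ j := by
    rw [Real.div_rpow (by positivity) zero_le_two, Real.rpow_neg zero_le_two, div_inv_eq_mul,
      Real.rpow_pow_comm hμ0.le, mul_comm]
  have hjb : j ≤ d - a := by
    have : (j : ℝ) ≤ ((d - a : ℕ) : ℝ) := by nlinarith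
    exact_mod_cast this
  have hjj : (0 : ℝ) < (j : ℝ) ^ j := by exact_mod_cast Nat.pow_self_pos
  have key : (2 : ℝ) ^ j * (R ^ j * (j : ℝ) ^ j) ≤ D * 2 ^ p * (R ^ j * (j : ℝ) ^ j) :=
    calc (2 : ℝ) ^ j * (R ^ j * (j : ℝ) ^ j) = (2 * R * j) ^ j := by ring
      _ ≤ ((d - a : ℕ) : ℝ) ^ j := pow_le_pow_left₀ (by positivity) hj j
      _ ≤ (j : ℝ) ^ j * ((d - a).choose j : ℕ) := by exact_mod_cast pow_le_pow_mul_choose hjb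
      _ ≤ (j : ℝ) ^ j * (D * (μ ^ j / 2) ^ (-p)) := by
        gcongr
        exact (Nat.cast_le.mpr (choose_le_ncard_largeIdx h2.le h1 j hε hfin)).trans hcard
      _ = D * 2 ^ p * (R ^ j * (j : ℝ) ^ j) := by rw [hεp]; ring
  exact le_of_mul_le_mul_right key (by positivity)

lemma sub_lt_of_largeIdxBound (h2 : 0 < Λ 2) (h1 : 1 ≤ Λ 1) (hp : 0 ≤ p) {a d : ℕ} {D : ℝ}
    (hD : LargeIdxBound Λ a d D p) :
    ((d - a : ℕ) : ℝ) < 2 * min (Λ 2) 1 ^ (-p) * (Real.logb 2 (D * 2 ^ p) + 1) := by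
  set R := min (Λ 2) 1 ^ (-p)
  have hR : 0 < 2 * R := by have := lt_min h2 one_pos; positivity
  set j := ⌊((d - a : ℕ) : ℝ) / (2 * R)⌋₊
  have hj : 2 * R * j ≤ ((d - a : ℕ) : ℝ) :=
    (le_div_iff₀' hR).mp (Nat.floor_le (by positivity))
  have h2j := two_pow_le_of_largeIdxBound h2 h1 hp hD hj
  have hjlog : (j : ℝ) ≤ Real.logb 2 (D * 2 ^ p) := by
    rw [Real.le_logb_iff_rpow_le one_lt_two ((pow_pos two_pos j).trans_le h2j),
      Real.rpow_natCast]
    exact h2j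
  calc ((d - a : ℕ) : ℝ) < 2 * R * (j + 1) := (div_lt_iff₀' hR).mp (Nat.lt_floor_add_one _)
    _ ≤ 2 * R * (Real.logb 2 (D * 2 ^ p) + 1) := by gcongr

lemma exists_sub_le_mul_log (h2 : 0 < Λ 2) (h1 : 1 ≤ Λ 1) (hp : 0 ≤ p) {a : ℕ → ℕ} {C q : ℝ}
    (hC : 0 < C) (hq : 0 ≤ q) (hbound : ∀ d : ℕ, 1 ≤ d → LargeIdxBound Λ (a d) d (C * d ^ q) p) :
    ∃ c : ℝ, 0 < c ∧ ∀ d : ℕ, 2 ≤ d → ((d - a d : ℕ) : ℝ) ≤ c * Real.log d := by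
  set R := min (Λ 2) 1 ^ (-p)
  have hR : 0 < R := by have := lt_min h2 one_pos; positivity
  set K := Real.logb 2 (C * 2 ^ p)
  refine ⟨2 * R * (|K| + 1 + q) / Real.log 2, by positivity, fun d hd => ?_⟩
  have hd0 : (0 : ℝ) < d := by positivity
  have hL : 1 ≤ Real.logb 2 d := by
    rw [Real.le_logb_iff_rpow_le one_lt_two hd0, Real.rpow_one]
    exact_mod_cast hd
  have hlogb : Real.logb 2 (C * d ^ q * 2 ^ p) = K + q * Real.logb 2 d := by
    rw [mul_right_comm, Real.logb_mul (by positivity) (by positivity),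
      Real.logb_rpow_eq_mul_logb_of_pos hd0]
  have hb := sub_lt_of_largeIdxBound h2 h1 hp (hbound d (by omega))
  rw [hlogb] at hb
  have hK : K + q * Real.logb 2 d + 1 ≤ (|K| + 1 + q) * Real.logb 2 d := by
    nlinarith [le_abs_self K, abs_nonneg K]
  calc ((d - a d : ℕ) : ℝ) ≤ 2 * R * ((|K| + 1 + q) * Real.logb 2 d) :=
        hb.le.trans (mul_le_mul_of_nonneg_left (by linarith) (by positivity))
    _ = 2 * R * (|K| + 1 + q) / Real.log 2 * Real.log d := by
      rw [Real.logb]; field_simp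

lemma exists_sub_le (h2 : 0 < Λ 2) (h1 : 1 ≤ Λ 1) (hp : 0 ≤ p) {a : ℕ → ℕ} {C : ℝ}
    (hbound : ∀ d : ℕ, 1 ≤ d → LargeIdxBound Λ (a d) d C p) :
    ∃ B : ℕ, ∀ d : ℕ, 1 ≤ d → d - a d ≤ B :=
  ⟨⌈2 * min (Λ 2) 1 ^ (-p) * (Real.logb 2 (C * 2 ^ p) + 1)⌉₊, fun d hd => by
    exact_mod_cast (sub_lt_of_largeIdxBound h2 h1 hp (hbound d hd)).le.trans (Nat.le_ceil _)⟩

lemma lt_one_div_of_sub_le (h1 : 1 ≤ Λ 1) {a : ℕ → ℕ} {B : ℕ} {C : ℝ}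
    (ha : ∀ d : ℕ, 1 ≤ d → a d ≤ d) (hB : ∀ d : ℕ, 1 ≤ d → d - a d ≤ B)
    (hbound : ∀ d : ℕ, 1 ≤ d → LargeIdxBound Λ (a d) d C p) : Λ 2 < 1 / Λ 1 := by
  rw [lt_div_iff₀ (by linarith)]
  by_contra! h21
  set J := B + ⌈C * 2 ^ p⌉₊
  have hd : 1 ≤ 2 * J + 2 := by omega
  have hJa : J ≤ a (2 * J + 2) := by have := ha _ hd; have := hB _ hd; omega
  obtain ⟨hfin, hcard⟩ := hbound _ hd (1 / 2) (by norm_num) (by norm_num)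
  have hcount := succ_le_ncard_largeIdx h1 h21 hJa (ha _ hd) (by omega) (by norm_num) hfin
  have hhalf : ((1 : ℝ) / 2) ^ (-p) = 2 ^ p := by
    rw [one_div, Real.inv_rpow zero_le_two, Real.rpow_neg zero_le_two, inv_inv]
  have : ((J + 1 : ℕ) : ℝ) ≤ ⌈C * 2 ^ p⌉₊ :=
    (Nat.cast_le.mpr hcount).trans (hcard.trans (hhalf ▸ Nat.le_ceil _))
  norm_cast at this
  omega

end Tractability

theorem stmt_4_general
    (Λ : ℕ → ℝ) (h2 : 0 < Λ 2)
    (a : ℕ → ℕ) (ha : ∀ d : ℕ, 1 ≤ d → 1 ≤ a d ∧ a d ≤ d) :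
    -- (i) polynomial tractability and λ₁ ≥ 1 imply b_d = O(ln d)
    (∀ C p q : ℝ, 0 < C → 0 < p → 0 ≤ q →
      (∀ d : ℕ, 1 ≤ d → ∀ ε : ℝ, 0 < ε → ε ≤ 1 →
        {k : Fin d → ℕ | k ∈ symIdx (a d) d ∧ ε ^ 2 < ∏ l, Λ (k l)}.Finite ∧
        ({k : Fin d → ℕ | k ∈ symIdx (a d) d ∧ ε ^ 2 < ∏ l, Λ (k l)}.ncard : ℝ) ≤
          C * ε ^ (-p) * (d : ℝ) ^ q) →
      1 ≤ Λ 1 →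
      ∃ c : ℝ, 0 < c ∧ ∀ d : ℕ, 2 ≤ d → ((d - a d : ℕ) : ℝ) ≤ c * Real.log d) ∧
    -- (ii) strong polynomial tractability and λ₁ ≥ 1 imply b_d = O(1) and λ₂ < 1/λ₁
    (∀ C p : ℝ, 0 < C → 0 < p →
      (∀ d : ℕ, 1 ≤ d → ∀ ε : ℝ, 0 < ε → ε ≤ 1 →
        {k : Fin d → ℕ | k ∈ symIdx (a d) d ∧ ε ^ 2 < ∏ l, Λ (k l)}.Finite ∧
        ({k : Fin d → ℕ | k ∈ symIdx (a d) d ∧ ε ^ 2 < ∏ l, Λ (k l)}.ncard : ℝ) ≤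
          C * ε ^ (-p)) →
      1 ≤ Λ 1 →
      (∃ B : ℕ, ∀ d : ℕ, 1 ≤ d → d - a d ≤ B) ∧ Λ 2 < 1 / Λ 1) := by
  refine ⟨fun C p q hC hp hq hPT h1 => ?_, fun C p _ hp hPT h1 => ?_⟩
  · refine exists_sub_le_mul_log h2 h1 hp.le hC hq fun d hd ε hε0 hε1 => ?_
    obtain ⟨hfin, hcard⟩ := hPT d hd ε hε0 hε1
    exact ⟨hfin, hcard.trans_eq (by ring)⟩
  · obtain ⟨B, hB⟩ := exists_sub_le h2 h1 hp.le hPT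
    exact ⟨⟨B, hB⟩, lt_one_div_of_sub_le h1 (fun d hd => (ha d hd).2) hB hPT⟩

/-- Necessary conditions for (strong) polynomial tractability of symmetric tensor
product problems with respect to the absolute error criterion, in the case `λ₁ ≥ 1`:
polynomial tractability forces `b_d = O(ln d)`, and strong polynomial tractability
forces `b_d = O(1)` and `λ₂ < 1/λ₁`.  Here `b_d = d - a_d`. -/
theorem stmt_4
    (Λ : ℕ → ℝ) (hnn : ∀ m, 0 ≤ Λ m)
    (hmono : ∀ m n : ℕ, 1 ≤ m → m ≤ n → Λ n ≤ Λ m) (h2 : 0 < Λ 2)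
    (a : ℕ → ℕ) (ha : ∀ d : ℕ, 1 ≤ d → 1 ≤ a d ∧ a d ≤ d) :
    -- (i) polynomial tractability and λ₁ ≥ 1 imply b_d = O(ln d)
    (∀ C p q : ℝ, 0 < C → 0 < p → 0 ≤ q →
      (∀ d : ℕ, 1 ≤ d → ∀ ε : ℝ, 0 < ε → ε ≤ 1 →
        {k : Fin d → ℕ | k ∈ symIdx (a d) d ∧ ε ^ 2 < ∏ l, Λ (k l)}.Finite ∧
        ({k : Fin d → ℕ | k ∈ symIdx (a d) d ∧ ε ^ 2 < ∏ l, Λ (k l)}.ncard : ℝ) ≤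
          C * ε ^ (-p) * (d : ℝ) ^ q) →
      1 ≤ Λ 1 →
      ∃ c : ℝ, 0 < c ∧ ∀ d : ℕ, 2 ≤ d → ((d - a d : ℕ) : ℝ) ≤ c * Real.log d) ∧
    -- (ii) strong polynomial tractability and λ₁ ≥ 1 imply b_d = O(1) and λ₂ < 1/λ₁
    (∀ C p : ℝ, 0 < C → 0 < p →
      (∀ d : ℕ, 1 ≤ d → ∀ ε : ℝ, 0 < ε → ε ≤ 1 →
        {k : Fin d → ℕ | k ∈ symIdx (a d) d ∧ ε ^ 2 < ∏ l, Λ (k l)}.Finite ∧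
        ({k : Fin d → ℕ | k ∈ symIdx (a d) d ∧ ε ^ 2 < ∏ l, Λ (k l)}.ncard : ℝ) ≤
          C * ε ^ (-p)) →
      1 ≤ Λ 1 →
      (∃ B : ℕ, ∀ d : ℕ, 1 ≤ d → d - a d ≤ B) ∧ Λ 2 < 1 / Λ 1) :=
  stmt_4_general Λ h2 a ha
end

section
/- Let (μ_m)_{m≥1} be a nonincreasing sequence of nonnegative real numbers with μ_1 > 0. Then for every V ∈ ℕ₀ and every d ≥ 1, the following inequality holds (as an inequality in [0,∞]): Σ_{k∈ℕ^d, 1≤k_1≤k_2≤…≤k_d} ∏_{l=1}^d μ_{k_l} ≤ μ_1^d · d^V · ( 1 + V + Σ_{L=1}^d μ_1^{−L} · Σ_{j∈ℕ^L, V+2 ≤ j_1 ≤ … ≤ j_L} ∏_{l=1}^L μ_{j_l} ). -/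
open scoped ENNReal

/-- Nondecreasing tuples in `ℕ^s` with all entries bounded below by `m`. -/
def ndSet (m s : ℕ) : Set (Fin s → ℕ) :=
  {k | (∀ i, m ≤ k i) ∧ ∀ i j : Fin s, i ≤ j → k i ≤ k j}

abbrev myCode (V s : ℕ) := Σ j : Fin (V + 1), (Fin (j : ℕ) → Fin s)

abbrev myT (V d : ℕ) := Σ L : Fin (d + 1), myCode V (d - (L : ℕ)) × ndSet (V + 2) (L : ℕ)

def cnt (d : ℕ) (k : Fin d → ℕ) (w : ℕ) : ℕ :=
  (Finset.filter (fun i : Fin d => k i ≤ w) Finset.univ).card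

lemma cnt_le (d : ℕ) (k : Fin d → ℕ) (w : ℕ) : cnt d k w ≤ d :=
  le_trans (Finset.card_filter_le _ _) (by simp)

lemma cnt_mono (d : ℕ) (k : Fin d → ℕ) {w w' : ℕ} (h : w ≤ w') : cnt d k w ≤ cnt d k w' := by
  apply Finset.card_le_card
  intro i hi
  simp only [Finset.mem_filter] at *
  exact ⟨hi.1, hi.2.trans h⟩

lemma lowerCard {n : ℕ} (P : Fin n → Prop) [DecidablePred P]
    (hP : ∀ i j : Fin n, i ≤ j → P j → P i) (i : Fin n) :
    P i ↔ (i : ℕ) < (Finset.univ.filter P).card := by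
  constructor
  · intro hi
    have hsub : Finset.Iic i ⊆ Finset.univ.filter P := by
      intro j hj
      simp only [Finset.mem_Iic] at hj
      simp [hP j i hj hi]
    have := Finset.card_le_card hsub
    rw [Fin.card_Iic] at this
    omega
  · intro hi
    by_contra hni
    have hsub : Finset.univ.filter P ⊆ Finset.Iio i := by
      intro j hj
      simp only [Finset.mem_filter] at hj
      simp only [Finset.mem_Iio]
      by_contra h'
      push_neg at h'
      exact hni (hP i j h' hj.2)
    have := Finset.card_le_card hsub
    rw [Fin.card_Iio] at this
    omega

lemma cnt_iff {d : ℕ} {k : Fin d → ℕ} (hk : ∀ i j : Fin d, i ≤ j → k i ≤ k j)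
    (w : ℕ) (i : Fin d) : k i ≤ w ↔ (i : ℕ) < cnt d k w :=
  lowerCard _ (fun i j hij hj => (hk i j hij).trans hj) i

def jc (V d : ℕ) (k : Fin d → ℕ) : ℕ :=
  (Finset.filter (fun v : Fin V => cnt d k ((v : ℕ) + 1) = 0) Finset.univ).card

lemma jc_le (V d : ℕ) (k : Fin d → ℕ) : jc V d k ≤ V :=
  le_trans (Finset.card_filter_le _ _) (by simp)

lemma jc_iff (V d : ℕ) (k : Fin d → ℕ) (v : Fin V) :
    cnt d k ((v : ℕ) + 1) = 0 ↔ (v : ℕ) < jc V d k :=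
  lowerCard _ (fun v v' hvv' h' => by
    have h1 : (v : ℕ) ≤ (v' : ℕ) := hvv'
    have h0 : cnt d k ((v' : ℕ) + 1) = 0 := h'
    have := cnt_mono d k (show (v:ℕ)+1 ≤ (v':ℕ)+1 by omega)
    show cnt d k ((v : ℕ) + 1) = 0
    omega) v

lemma tail_ge {d V : ℕ} {k : Fin d → ℕ} (hk : ∀ i j : Fin d, i ≤ j → k i ≤ k j)
    (i : Fin d) (h : cnt d k (V + 1) ≤ (i : ℕ)) : V + 2 ≤ k i := by
  have hi := cnt_iff hk (V + 1) i
  omega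

def myF (V d : ℕ) (k : ndSet 1 d) : myT V d :=
  ⟨⟨d - cnt d k.1 (V + 1), by have := cnt_le d k.1 (V+1); omega⟩,
   ⟨⟨⟨V - jc V d k.1, by have := jc_le V d k.1; omega⟩,
     fun r => ⟨cnt d k.1 ((jc V d k.1 + (r : ℕ)) + 1) - 1, by
       have hr : (r : ℕ) < V - jc V d k.1 := r.isLt
       have hjc := jc_le V d k.1
       have hc := cnt_le d k.1 (V + 1)
       have h1 : cnt d k.1 ((jc V d k.1 + (r : ℕ)) + 1) ≤ cnt d k.1 (V + 1) :=
         cnt_mono d k.1 (by omega)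
       have h2 : ¬ cnt d k.1 ((jc V d k.1 + (r : ℕ)) + 1) = 0 := by
        intro h0
        have h3 := (jc_iff V d k.1 ⟨jc V d k.1 + (r : ℕ), by omega⟩).mp h0
        simp only at h3
        omega
       show cnt d k.1 ((jc V d k.1 + (r : ℕ)) + 1) - 1 < d - (d - cnt d k.1 (V + 1))
       omega⟩⟩,
    ⟨fun r => k.1 ⟨cnt d k.1 (V + 1) + (r : ℕ), by
        have hr : (r : ℕ) < d - cnt d k.1 (V + 1) := r.isLt
        have := cnt_le d k.1 (V+1); omega⟩,
     by
      constructor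
      · intro r
        exact tail_ge k.2.2 _ (by show cnt d k.1 (V+1) ≤ cnt d k.1 (V+1) + (r:ℕ); omega)
      · intro r s hrs
        apply k.2.2
        have h1 : (r : ℕ) ≤ (s : ℕ) := hrs
        show (⟨cnt d k.1 (V+1) + (r:ℕ), _⟩ : Fin d) ≤ ⟨cnt d k.1 (V+1) + (s:ℕ), _⟩
        simp only [Fin.mk_le_mk]
        omega⟩⟩⟩

def myDecode (V d : ℕ) (x : myT V d) : Fin d → ℕ := fun i =>
  if hi : (i : ℕ) < d - (x.1 : ℕ) then
    1 + (Finset.filter (fun v : Fin V =>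
      (if hv : (v : ℕ) < V - (x.2.1.1 : ℕ) then 0
       else ((x.2.1.2 ⟨(v : ℕ) - (V - (x.2.1.1 : ℕ)), by
          have hv1 := v.isLt
          have hv2 : (x.2.1.1 : ℕ) < V + 1 := x.2.1.1.isLt
          omega⟩ : Fin (d - (x.1:ℕ))) : ℕ) + 1)
        ≤ (i : ℕ)) Finset.univ).card
  else
    x.2.2.1 ⟨(i : ℕ) - (d - (x.1 : ℕ)), by
      have h1 := i.isLt
      have h2 : (x.1 : ℕ) < d + 1 := x.1.isLt
      omega⟩

lemma cardFilterValLt (n m : ℕ) :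
    (Finset.filter (fun v : Fin n => (v : ℕ) < m) Finset.univ).card = min m n := by
  rw [Finset.card_filter]
  rw [Fin.sum_univ_eq_sum_range (fun i => if i < m then 1 else 0) n]
  rw [← Finset.card_filter]
  have : (Finset.range n).filter (fun v => v < m) = Finset.range (min m n) := by
    ext x
    simp only [Finset.mem_filter, Finset.mem_range, lt_min_iff]
    omega
  rw [this, Finset.card_range]

lemma myF_tail (V d : ℕ) (k : ndSet 1 d) (r : Fin ((((myF V d k).1 : Fin (d+1)) : ℕ))) :
    ((myF V d k).2.2.1 r : ℕ) = k.1 ⟨cnt d k.1 (V + 1) + (r : ℕ), by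
      have hr : (r : ℕ) < d - cnt d k.1 (V + 1) := r.isLt
      have := cnt_le d k.1 (V + 1); omega⟩ := rfl

lemma decode_myF (V d : ℕ) (k : ndSet 1 d) : myDecode V d (myF V d k) = k.1 := by
  funext i
  have hcd := cnt_le d k.1 (V + 1)
  have hjc := jc_le V d k.1
  have hval : ((myF V d k).1 : ℕ) = d - cnt d k.1 (V + 1) := rfl
  have hjval : ((myF V d k).2.1.1 : ℕ) = V - jc V d k.1 := rfl
  rw [myDecode]
  by_cases hi : (i : ℕ) < d - ((myF V d k).1 : ℕ)
  · rw [dif_pos hi]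
    have hic : (i : ℕ) < cnt d k.1 (V + 1) := by omega
    have hkiV : k.1 i ≤ V + 1 := (cnt_iff k.2.2 (V + 1) i).mpr hic
    have hki1 : 1 ≤ k.1 i := k.2.1 i
    have hgrec : ∀ v : Fin V, ∀ hv : ¬ ((v : ℕ) < V - ((myF V d k).2.1.1 : ℕ)),
        (((myF V d k).2.1.2 ⟨(v : ℕ) - (V - ((myF V d k).2.1.1 : ℕ)), by
          have hv1 := v.isLt
          have hv2 : ((myF V d k).2.1.1 : ℕ) < V + 1 := (myF V d k).2.1.1.isLt
          omega⟩ : Fin _) : ℕ)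
        = cnt d k.1 ((jc V d k.1 + ((v : ℕ) - (V - (V - jc V d k.1)))) + 1) - 1 := fun v hv => rfl
    have hfilter : Finset.filter (fun v : Fin V =>
        (if hv : (v : ℕ) < V - ((myF V d k).2.1.1 : ℕ) then 0
         else (((myF V d k).2.1.2 ⟨(v : ℕ) - (V - ((myF V d k).2.1.1 : ℕ)), by
            have hv1 := v.isLt
            have hv2 : ((myF V d k).2.1.1 : ℕ) < V + 1 := (myF V d k).2.1.1.isLt
            omega⟩ : Fin _) : ℕ) + 1) ≤ (i : ℕ)) Finset.univ
        = Finset.filter (fun v : Fin V => (v : ℕ) < k.1 i - 1) Finset.univ := by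
      apply Finset.filter_congr
      intro v _
      have hvV := v.isLt
      have hcntiff := cnt_iff k.2.2 ((v : ℕ) + 1) i
      by_cases hv : (v : ℕ) < V - ((myF V d k).2.1.1 : ℕ)
      · rw [dif_pos hv]
        have hv' : (v : ℕ) < jc V d k.1 := by omega
        have h0 : cnt d k.1 ((v : ℕ) + 1) = 0 := (jc_iff V d k.1 v).mpr hv'
        simp only [Nat.zero_le, true_iff]
        omega
      · rw [dif_neg hv]
        rw [hgrec v hv]
        have hv' : ¬ ((v : ℕ) < jc V d k.1) := by omega
        have harg : (jc V d k.1 + ((v : ℕ) - (V - (V - jc V d k.1)))) + 1 = (v : ℕ) + 1 := by omega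
        rw [harg]
        have hne : cnt d k.1 ((v : ℕ) + 1) ≠ 0 := by
          intro h0; exact hv' ((jc_iff V d k.1 v).mp h0)
        constructor
        · intro h; omega
        · intro h; omega
    rw [hfilter, cardFilterValLt]
    omega
  · rw [dif_neg hi]
    rw [myF_tail]
    apply congrArg
    apply Fin.ext
    show cnt d k.1 (V + 1) + ((i : ℕ) - (d - ((myF V d k).1 : ℕ))) = (i : ℕ)
    omega

lemma myF_inj (V d : ℕ) : Function.Injective (myF V d) := by
  intro a b hab
  apply Subtype.ext
  rw [← decode_myF V d a, ← decode_myF V d b, hab]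

lemma prod_le_myF (μ : ℕ → ℝ) (hmono : ∀ m n : ℕ, 1 ≤ m → m ≤ n → μ n ≤ μ m)
    (V d : ℕ) (k : ndSet 1 d) :
    (∏ l, ENNReal.ofReal (μ (k.1 l))) ≤
      ENNReal.ofReal (μ 1) ^ (d - ((myF V d k).1 : ℕ)) *
        ∏ l, ENNReal.ofReal (μ ((myF V d k).2.2.1 l)) := by
  have hval : ((myF V d k).1 : ℕ) = d - cnt d k.1 (V + 1) := rfl
  have hcd := cnt_le d k.1 (V + 1)
  rw [← Finset.prod_filter_mul_prod_filter_not Finset.univ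
    (fun l : Fin d => (l : ℕ) < cnt d k.1 (V + 1)) (fun l => ENNReal.ofReal (μ (k.1 l)))]
  have h1 : (∏ l ∈ Finset.filter (fun l : Fin d => (l : ℕ) < cnt d k.1 (V + 1)) Finset.univ,
      ENNReal.ofReal (μ (k.1 l))) ≤ ENNReal.ofReal (μ 1) ^ (d - ((myF V d k).1 : ℕ)) := by
    calc (∏ l ∈ Finset.filter (fun l : Fin d => (l : ℕ) < cnt d k.1 (V + 1)) Finset.univ,
        ENNReal.ofReal (μ (k.1 l)))
        ≤ ∏ _l ∈ Finset.filter (fun l : Fin d => (l : ℕ) < cnt d k.1 (V + 1)) Finset.univ,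
          ENNReal.ofReal (μ 1) := by
          apply Finset.prod_le_prod'
          intro l _
          exact ENNReal.ofReal_le_ofReal (hmono 1 (k.1 l) le_rfl (k.2.1 l))
      _ = ENNReal.ofReal (μ 1) ^ (d - ((myF V d k).1 : ℕ)) := by
          rw [Finset.prod_const, cardFilterValLt]
          congr 1
          omega
  have h2 : (∏ l ∈ Finset.filter (fun l : Fin d => ¬ ((l : ℕ) < cnt d k.1 (V + 1))) Finset.univ,
      ENNReal.ofReal (μ (k.1 l))) = ∏ l, ENNReal.ofReal (μ ((myF V d k).2.2.1 l)) := by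
    have he : Function.Injective (fun r : Fin ((myF V d k).1 : ℕ) =>
        (⟨cnt d k.1 (V + 1) + (r : ℕ), by
          have hr : (r : ℕ) < ((myF V d k).1 : ℕ) := r.isLt
          omega⟩ : Fin d)) := by
      intro a b hab
      apply Fin.ext
      have h := congrArg Fin.val hab
      simp only at h
      omega
    have hmap : Finset.filter (fun l : Fin d => ¬ ((l : ℕ) < cnt d k.1 (V + 1))) Finset.univ
        = Finset.map ⟨_, he⟩ Finset.univ := by
      ext l
      simp only [Finset.mem_filter, Finset.mem_univ, true_and, not_lt, Finset.mem_map,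
        Function.Embedding.coeFn_mk, true_and]
      constructor
      · intro hl
        refine ⟨⟨(l : ℕ) - cnt d k.1 (V + 1), by have := l.isLt; omega⟩, ?_⟩
        apply Fin.ext
        show cnt d k.1 (V + 1) + ((l : ℕ) - cnt d k.1 (V + 1)) = (l : ℕ)
        omega
      · rintro ⟨a, rfl⟩
        show cnt d k.1 (V + 1) ≤ cnt d k.1 (V + 1) + (a : ℕ)
        omega
    rw [hmap, Finset.prod_map]
    exact Finset.prod_congr rfl (fun r _ => rfl)
  rw [h2]
  exact mul_le_mul' h1 le_rfl

lemma geomBound (s d V : ℕ) (h : s + 1 ≤ d) :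
    ∑ j ∈ Finset.range (V + 1), s ^ j ≤ d ^ V := by
  induction V with
  | zero => simp
  | succ V ih =>
    rw [Finset.sum_range_succ]
    have h1 : s ^ (V + 1) ≤ (d - 1) * d ^ V := by
      calc s ^ (V+1) = s * s ^ V := by ring
        _ ≤ (d-1) * d ^ V := by
          apply Nat.mul_le_mul (by omega) (Nat.pow_le_pow_left (by omega) V)
    have : d ^ (V+1) = d ^ V + (d - 1) * d ^ V := by
      have hd : d = 1 + (d - 1) := by omega
      calc d ^ (V+1) = d * d ^ V := by ring
        _ = (1 + (d-1)) * d ^ V := by rw [← hd]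
        _ = d ^ V + (d - 1) * d ^ V := by ring
    omega

lemma geomBound0 (d V : ℕ) (h : 1 ≤ d) :
    ∑ j ∈ Finset.range (V + 1), d ^ j ≤ (V + 1) * d ^ V := by
  calc ∑ j ∈ Finset.range (V + 1), d ^ j ≤ ∑ _j ∈ Finset.range (V + 1), d ^ V :=
        Finset.sum_le_sum fun j hj => Nat.pow_le_pow_right h (by simp at hj; omega)
    _ = (V + 1) * d ^ V := by rw [Finset.sum_const, Finset.card_range, smul_eq_mul]

lemma card_myCode (V s : ℕ) :
    Fintype.card (myCode V s) = ∑ j ∈ Finset.range (V + 1), s ^ j := by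
  rw [Fintype.card_sigma]
  rw [← Fin.sum_univ_eq_sum_range (fun j => s ^ j) (V + 1)]
  apply Finset.sum_congr rfl
  intro j _
  rw [Fintype.card_fun, Fintype.card_fin, Fintype.card_fin]

/-- The combinatorial bound for sums of products over nondecreasing multi-indices
(Lemma `lemma_symNEW` of the paper), as an inequality in `[0,∞]`. -/
theorem stmt_5
    (μ : ℕ → ℝ) (hnn : ∀ m, 0 ≤ μ m)
    (hmono : ∀ m n : ℕ, 1 ≤ m → m ≤ n → μ n ≤ μ m) (h1 : 0 < μ 1) :
    ∀ V : ℕ, ∀ d : ℕ, 1 ≤ d →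
      (∑' k : ndSet 1 d, ∏ l, ENNReal.ofReal (μ (k.1 l)))
        ≤ ENNReal.ofReal (μ 1) ^ d * (d : ℝ≥0∞) ^ V *
          (1 + (V : ℝ≥0∞) +
            ∑ L ∈ Finset.Icc 1 d, (ENNReal.ofReal (μ 1))⁻¹ ^ L *
              ∑' j : ndSet (V + 2) L, ∏ l, ENNReal.ofReal (μ (j.1 l))) := by
  intro V d hd
  classical
  set A := ENNReal.ofReal (μ 1) with hA
  set S : ℕ → ℝ≥0∞ := fun L => ∑' t : ndSet (V + 2) L, ∏ l, ENNReal.ofReal (μ (t.1 l)) with hS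
  have hA0 : A ≠ 0 := by
    rw [hA]
    exact (ENNReal.ofReal_pos.mpr h1).ne'
  have hAtop : A ≠ ⊤ := ENNReal.ofReal_ne_top
  -- Step 1
  have step1 : (∑' k : ndSet 1 d, ∏ l, ENNReal.ofReal (μ (k.1 l)))
      ≤ ∑' x : myT V d, A ^ (d - (x.1 : ℕ)) * ∏ l, ENNReal.ofReal (μ (x.2.2.1 l)) := by
    calc (∑' k : ndSet 1 d, ∏ l, ENNReal.ofReal (μ (k.1 l)))
        ≤ ∑' k : ndSet 1 d, A ^ (d - ((myF V d k).1 : ℕ)) *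
            ∏ l, ENNReal.ofReal (μ ((myF V d k).2.2.1 l)) :=
          ENNReal.tsum_le_tsum fun k => prod_le_myF μ hmono V d k
      _ ≤ _ := ENNReal.tsum_comp_le_tsum_of_injective (myF_inj V d)
          (fun x => A ^ (d - (x.1 : ℕ)) * ∏ l, ENNReal.ofReal (μ (x.2.2.1 l)))
  -- Step 2
  have step2 : (∑' x : myT V d, A ^ (d - (x.1 : ℕ)) * ∏ l, ENNReal.ofReal (μ (x.2.2.1 l)))
      = ∑ L ∈ Finset.range (d + 1),
          ((∑ j ∈ Finset.range (V + 1), (d - L) ^ j : ℕ) : ℝ≥0∞) * (A ^ (d - L) * S L) := by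
    rw [ENNReal.tsum_sigma'
      (fun x : myT V d => A ^ (d - (x.1 : ℕ)) * ∏ l, ENNReal.ofReal (μ (x.2.2.1 l)))]
    rw [tsum_fintype]
    rw [← Fin.sum_univ_eq_sum_range (fun L =>
      ((∑ j ∈ Finset.range (V + 1), (d - L) ^ j : ℕ) : ℝ≥0∞) * (A ^ (d - L) * S L)) (d + 1)]
    apply Finset.sum_congr rfl
    intro L _
    rw [ENNReal.tsum_prod'
      (f := fun p : myCode V (d - (L : ℕ)) × ndSet (V + 2) (L : ℕ) =>
        A ^ (d - (L : ℕ)) * ∏ l, ENNReal.ofReal (μ (p.2.1 l)))]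
    have hinner : ∀ c : myCode V (d - (L : ℕ)),
        (∑' t : ndSet (V + 2) (L : ℕ), A ^ (d - (L : ℕ)) * ∏ l, ENNReal.ofReal (μ (t.1 l)))
          = A ^ (d - (L : ℕ)) * S (L : ℕ) := by
      intro c
      rw [ENNReal.tsum_mul_left]
    rw [tsum_congr hinner]
    rw [tsum_fintype, Finset.sum_const, Finset.card_univ, card_myCode, nsmul_eq_mul]
  -- S 0 = 1
  have hS0 : S 0 = 1 := by
    have hall : ∀ t : ndSet (V + 2) 0, (∏ l, ENNReal.ofReal (μ (t.1 l))) = 1 := by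
      intro t
      simp
    rw [hS]
    show (∑' t : ndSet (V + 2) 0, ∏ l, ENNReal.ofReal (μ (t.1 l))) = 1
    rw [tsum_congr hall]
    rw [tsum_eq_single (⟨fun i => i.elim0, fun i => i.elim0, fun i _ _ => i.elim0⟩ :
      ndSet (V + 2) 0)]
    intro b hb
    exact absurd (Subtype.ext (funext fun i => i.elim0)) hb
  -- Step 3 : the numeric bound
  refine le_trans step1 (le_trans (le_of_eq step2) ?_)
  have hsplit : Finset.range (d + 1) = insert 0 (Finset.Icc 1 d) := by
    ext x
    simp only [Finset.mem_insert, Finset.mem_Icc, Finset.mem_range]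
    omega
  rw [hsplit, Finset.sum_insert (by simp)]
  have hrhs : A ^ d * (d : ℝ≥0∞) ^ V * (1 + (V : ℝ≥0∞) + ∑ L ∈ Finset.Icc 1 d, A⁻¹ ^ L * S L)
      = A ^ d * (d : ℝ≥0∞) ^ V * (1 + (V : ℝ≥0∞))
        + ∑ L ∈ Finset.Icc 1 d, A ^ d * (d : ℝ≥0∞) ^ V * (A⁻¹ ^ L * S L) := by
    rw [mul_add, Finset.mul_sum]
  rw [hrhs]
  apply add_le_add
  · -- L = 0 term
    rw [Nat.sub_zero, hS0, mul_one]
    have hnat : ((∑ j ∈ Finset.range (V + 1), d ^ j : ℕ) : ℝ≥0∞)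
        ≤ ((V + 1) * d ^ V : ℕ) := by
      exact_mod_cast Nat.cast_le.mpr (geomBound0 d V hd)
    calc ((∑ j ∈ Finset.range (V + 1), d ^ j : ℕ) : ℝ≥0∞) * A ^ d
        ≤ (((V + 1) * d ^ V : ℕ) : ℝ≥0∞) * A ^ d := mul_le_mul_left hnat _
      _ = A ^ d * (d : ℝ≥0∞) ^ V * (1 + (V : ℝ≥0∞)) := by
          push_cast
          ring
  · apply Finset.sum_le_sum
    intro L hL
    simp only [Finset.mem_Icc] at hL
    have hpow : A ^ d * A⁻¹ ^ L = A ^ (d - L) := by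
      have hsplitpow : A ^ d = A ^ (d - L) * A ^ L := by
        rw [← pow_add]
        congr 1
        omega
      have hone : A ^ L * A⁻¹ ^ L = 1 := by
        rw [← mul_pow, ENNReal.mul_inv_cancel hA0 hAtop, one_pow]
      rw [hsplitpow, mul_assoc, hone, mul_one]
    have hnat : ((∑ j ∈ Finset.range (V + 1), (d - L) ^ j : ℕ) : ℝ≥0∞) ≤ (d : ℝ≥0∞) ^ V := by
      have := geomBound (d - L) d V (by omega)
      exact_mod_cast this
    calc ((∑ j ∈ Finset.range (V + 1), (d - L) ^ j : ℕ) : ℝ≥0∞) * (A ^ (d - L) * S L)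
        ≤ (d : ℝ≥0∞) ^ V * (A ^ (d - L) * S L) := mul_le_mul_left hnat _
      _ = A ^ d * (d : ℝ≥0∞) ^ V * (A⁻¹ ^ L * S L) := by
          rw [← hpow]
          ring
end

section
/- Let λ = (λ_m)_{m≥1} be a nonincreasing sequence of nonnegative reals with λ_2 > 0, suppose Σ_m λ_m^{τ₀} < ∞ for some τ₀ ∈ (0,∞), let 1 ≤ a_d ≤ d for each d ≥ 1, b_d = d − a_d, and set ∇_d = {k ∈ ℕ^d : k_1 ≤ … ≤ k_{a_d}} (symmetric setting), with n(ε,d) = #{k ∈ ∇_d : ∏_{l=1}^d λ_{k_l} > ε²}. Then: (i) if λ_1 < 1, there exist C, p > 0 such that n(ε,d) ≤ C·ε^{−p} for all d ∈ ℕ and ε ∈ (0,1] (strong polynomial tractability); (ii) if λ_1 = 1 > λ_2 and sup_d b_d < ∞, the problem is strongly polynomially tractable; (iii) if λ_1 = 1 and there is c > 0 with b_d ≤ c·ln(d) for all d ≥ 2, then there exist C, p > 0, q ≥ 0 with n(ε,d) ≤ C·ε^{−p}·d^q for all d ∈ ℕ, ε ∈ (0,1] (polynomial tractability). In all cases the counted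 sets are asserted to be finite. -/
/-!
Pick `t` with `λ_m ≤ 1` for `1 ≤ m ≤ t` and `λ_{t+1} < 1`, and then `τ ≥ τ₀` so large that
`σ := ∑_{m > t} λ_m^τ ≤ 1/2`. By Markov's inequality `n(ε,d) ≤ ε^{-2τ} ∑_{k ∈ ∇_d} ∏_l λ_{k_l}^τ`,
and this sum factors into the `b_d` free coordinates, each contributing `∑_m λ_m^τ ≤ t + 1`, and a
sum over nondecreasing `k ∈ ℕ^{a_d}`. Recursing on the first entry of such a `k`, the entries
`≤ t` are counted by a hockey-stick sum and the entries `> t` cost a factor `σ` each, which gives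
`2 · binom(a_d + t - 1, t - 1)`, a polynomial in `a_d` of degree `t - 1`.
Case (i) is `t = 0`, case (ii) is `t = 1`, and in case (iii) `(t + 1)^{b_d} ≤ d^{c ln (t + 1)}`.
-/

open Finset
open scoped ENNReal

namespace ENNReal

theorem tsum_pi_prod {β : Type*} (g : β → ℝ≥0∞) : ∀ d : ℕ,
    ∑' k : Fin d → β, ∏ l, g (k l) = (∑' b, g b) ^ d
  | 0 => by simp
  | d + 1 => by
    rw [← (Fin.consEquiv fun _ => β).tsum_eq, ENNReal.tsum_prod', pow_succ', ← tsum_pi_prod g d,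
      ← ENNReal.tsum_mul_right]
    refine tsum_congr fun b => ?_
    rw [← ENNReal.tsum_mul_left]
    exact tsum_congr fun k => Fin.prod_univ_succ _

theorem tsum_indicator_Ici (f : ℕ → ℝ≥0∞) (c : ℕ) :
    ∑' m, (Set.Ici c).indicator f m = ∑' m, f (m + c) := by
  rw [← ENNReal.summable.sum_add_tsum_nat_add' (k := c), Finset.sum_eq_zero, zero_add]
  · exact tsum_congr fun m => Set.indicator_of_mem (Nat.le_add_left c m) f
  · exact fun m hm => Set.indicator_of_notMem (by simpa using hm) f

theorem tsum_indicator_forall_le (g : ℕ → ℝ≥0∞) (c d : ℕ) :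
    ∑' k : Fin d → ℕ, {k : Fin d → ℕ | ∀ l, c ≤ k l}.indicator (fun k => ∏ l, g (k l)) k
      = (∑' m, g (m + c)) ^ d := by
  rw [← tsum_indicator_Ici, ← tsum_pi_prod]
  refine tsum_congr fun k => ?_
  rw [Set.indicator_apply]
  split_ifs with hk
  · exact prod_congr rfl fun l _ => (Set.indicator_of_mem (hk l) g).symm
  · obtain ⟨l, hl⟩ := not_forall.1 hk
    exact (prod_eq_zero (mem_univ l) (Set.indicator_of_notMem hl g)).symm

theorem ncard_mul_le_tsum {α : Type*} {f : α → ℝ≥0∞} {c : ℝ≥0∞} (hc : c ≠ 0)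
    (hf : ∑' x, f x ≠ ∞) :
    {x | c < f x}.Finite ∧ ({x | c < f x}.ncard : ℝ≥0∞) * c ≤ ∑' x, f x := by
  have hfin : {x | c < f x}.Finite :=
    (finite_const_le_of_tsum_ne_top hf hc).subset fun x (hx : c < f x) => hx.le
  refine ⟨hfin, ?_⟩
  calc ({x | c < f x}.ncard : ℝ≥0∞) * c = ∑ _x ∈ hfin.toFinset, c := by
        rw [Set.ncard_eq_toFinset_card _ hfin, Finset.sum_const, nsmul_eq_mul]
    _ ≤ ∑ x ∈ hfin.toFinset, f x := Finset.sum_le_sum fun x hx => (hfin.mem_toFinset.1 hx).le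
    _ ≤ ∑' x, f x := ENNReal.sum_le_tsum _

theorem sum_range_pow_le_two {x : ℝ≥0∞} (hx : x ≤ 1 / 2) (n : ℕ) :
    ∑ j ∈ range n, x ^ j ≤ 2 := calc
  _ ≤ ∑' j, x ^ j := ENNReal.sum_le_tsum _
  _ = (1 - x)⁻¹ := ENNReal.tsum_geometric x
  _ ≤ (1 - 1 / 2)⁻¹ := by gcongr
  _ = 2 := by norm_num

end ENNReal

theorem Nat.sum_range_add_sub_choose (a s : ℕ) :
    ∑ i ∈ range (s + 1), (a + (s - i)).choose (s - i) = (a + 1 + s).choose s := by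
  have reflect := sum_range_reflect (fun j => (a + j).choose j) (s + 1)
  simp only [add_tsub_cancel_right] at reflect
  rw [reflect, Nat.choose_symm_of_eq_add (by ring : a + 1 + s = s + (a + 1)),
    show a + 1 + s = s + a + 1 by ring, ← Nat.sum_range_add_choose]
  exact sum_congr rfl fun i _ => by rw [add_comm, Nat.choose_symm_add]

theorem Fin.monotone_cons_iff {α : Type*} [Preorder α] {n : ℕ} {x : α} {f : Fin n → α} :
    Monotone (Fin.cons x f : Fin (n + 1) → α) ↔ (∀ l, x ≤ f l) ∧ Monotone f := by
  refine ⟨fun h => ⟨fun l => by simpa using h (Fin.zero_le l.succ),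
    fun i j hij => by simpa using h (Fin.succ_le_succ_iff.2 hij)⟩, fun ⟨hx, hf⟩ i j hij => ?_⟩
  cases i using Fin.cases with
  | zero => cases j using Fin.cases with
    | zero => exact le_rfl
    | succ j => simpa using hx j
  | succ i => cases j using Fin.cases with
    | zero => simp at hij
    | succ j => simpa using hf (Fin.succ_le_succ_iff.1 hij)

def monotoneFrom (a c : ℕ) : Set (Fin a → ℕ) := {k | (∀ l, c ≤ k l) ∧ Monotone k}

theorem monotoneFrom_antitone (a : ℕ) : Antitone (monotoneFrom a) :=
  fun _ _ h _ hk => ⟨fun l => h.trans (hk.1 l), hk.2⟩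

theorem cons_mem_monotoneFrom_iff {a c m : ℕ} {k : Fin a → ℕ} :
    (Fin.cons m k : Fin (a + 1) → ℕ) ∈ monotoneFrom (a + 1) c ↔ c ≤ m ∧ k ∈ monotoneFrom a m := by
  simp only [monotoneFrom, Set.mem_ofPred_eq, Fin.monotone_cons_iff, Fin.forall_fin_succ,
    Fin.cons_zero, Fin.cons_succ]
  exact ⟨fun ⟨⟨hc, _⟩, hk⟩ => ⟨hc, hk⟩,
    fun ⟨hc, hm, hk⟩ => ⟨⟨hc, fun l => hc.trans (hm l)⟩, hm, hk⟩⟩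

noncomputable def monotoneSum (g : ℕ → ℝ≥0∞) (a c : ℕ) : ℝ≥0∞ :=
  ∑' k : Fin a → ℕ, (monotoneFrom a c).indicator (fun k => ∏ l, g (k l)) k

section monotoneSum

variable (g : ℕ → ℝ≥0∞)

theorem monotoneSum_zero (c : ℕ) : monotoneSum g 0 c = 1 := by
  simp [monotoneSum, monotoneFrom, Subsingleton.monotone]

theorem monotoneSum_succ (a c : ℕ) :
    monotoneSum g (a + 1) c = ∑' m, g (m + c) * monotoneSum g a (m + c) := by
  rw [monotoneSum, ← (Fin.consEquiv fun _ => ℕ).tsum_eq, ENNReal.tsum_prod',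
    ← ENNReal.tsum_indicator_Ici (fun m => g m * monotoneSum g a m)]
  refine tsum_congr fun m => ?_
  rw [Set.indicator_apply]
  split_ifs with hm
  · rw [monotoneSum, ← ENNReal.tsum_mul_left]
    refine tsum_congr fun k => ?_
    change (monotoneFrom (a + 1) c).indicator (fun k => ∏ l, g (k l)) (Fin.cons m k) = _
    by_cases hk : k ∈ monotoneFrom a m
    · rw [Set.indicator_of_mem (cons_mem_monotoneFrom_iff.2 ⟨hm, hk⟩), Set.indicator_of_mem hk]
      simp only [Fin.prod_univ_succ, Fin.cons_zero, Fin.cons_succ]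
    · rw [Set.indicator_of_notMem fun h => hk (cons_mem_monotoneFrom_iff.1 h).2,
        Set.indicator_of_notMem hk, mul_zero]
  · exact ENNReal.tsum_eq_zero.2 fun k =>
      Set.indicator_of_notMem (fun h => hm (cons_mem_monotoneFrom_iff.1 h).1) _

theorem monotoneSum_antitone (a : ℕ) : Antitone (monotoneSum g a) := fun _ _ h =>
  ENNReal.tsum_le_tsum fun _ => Set.indicator_le_indicator_of_subset
    (monotoneFrom_antitone a h) (fun _ => zero_le) _

theorem monotoneSum_le_pow (a c : ℕ) : monotoneSum g a c ≤ (∑' m, g (m + c)) ^ a := by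
  rw [← ENNReal.tsum_indicator_forall_le]
  exact ENNReal.tsum_le_tsum fun _ =>
    Set.indicator_le_indicator_of_subset (fun _ hk => hk.1) (fun _ => zero_le) _

theorem monotoneSum_le_tail_pow {t c : ℕ} (htc : t + 1 ≤ c) (a : ℕ) :
    monotoneSum g a c ≤ (∑' m, g (m + (t + 1))) ^ a :=
  (monotoneSum_antitone g a htc).trans (monotoneSum_le_pow g a (t + 1))

theorem monotoneSum_le_choose_mul (a : ℕ) {c t : ℕ} (hct : c ≤ t)
    (hg : ∀ m, c ≤ m → m ≤ t → g m ≤ 1) :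
    monotoneSum g a c ≤
      (a + (t - c)).choose (t - c) * ∑ j ∈ range (a + 1), (∑' m, g (m + (t + 1))) ^ j := by
  set σ := ∑' m, g (m + (t + 1))
  induction a generalizing c with
  | zero => simp [monotoneSum_zero]
  | succ a ih =>
    obtain ⟨s, rfl⟩ := Nat.exists_eq_add_of_le hct
    have head : ∑ i ∈ range (s + 1), g (i + c) * monotoneSum g a (i + c) ≤
        (a + 1 + s).choose s * ∑ j ∈ range (a + 1), σ ^ j := calc
      _ ≤ ∑ i ∈ range (s + 1), ((a + (s - i)).choose (s - i) : ℝ≥0∞) *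
            ∑ j ∈ range (a + 1), σ ^ j := by
        refine sum_le_sum fun i hi => ?_
        have hi : i ≤ s := Nat.lt_succ_iff.1 (mem_range.1 hi)
        have hle := ih (c := i + c) (by omega) fun m hm hm' => hg m (by omega) hm'
        rw [show c + s - (i + c) = s - i by omega] at hle
        exact (mul_le_of_le_one_left zero_le (hg _ (by omega) (by omega))).trans hle
      _ = (a + 1 + s).choose s * ∑ j ∈ range (a + 1), σ ^ j := by
        rw [← sum_mul, ← Nat.sum_range_add_sub_choose]; push_cast; rfl
    have tail : ∑' m, g (m + (s + 1) + c) * monotoneSum g a (m + (s + 1) + c) ≤ σ ^ (a + 1) := calc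
      _ ≤ ∑' m, g (m + (c + s + 1)) * σ ^ a := ENNReal.tsum_le_tsum fun m => by
        rw [show m + (s + 1) + c = m + (c + s + 1) by omega]
        gcongr
        exact monotoneSum_le_tail_pow g (by omega) a
      _ = σ ^ (a + 1) := by rw [ENNReal.tsum_mul_right, pow_succ']
    rw [monotoneSum_succ, ← ENNReal.summable.sum_add_tsum_nat_add' (k := s + 1),
      Nat.add_sub_cancel_left, sum_range_succ _ (a + 1)]
    refine (add_le_add head tail).trans ?_
    rw [mul_add]
    gcongr
    exact le_mul_of_one_le_left zero_le (Nat.one_le_cast.2 (Nat.choose_pos (by omega)))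

theorem monotoneSum_le_two_mul_choose {t : ℕ} (hg : ∀ m, 1 ≤ m → m ≤ t → g m ≤ 1)
    (hσ : ∑' m, g (m + (t + 1)) ≤ 1 / 2) (a : ℕ) :
    monotoneSum g a 1 ≤ 2 * (a + (t - 1)).choose (t - 1) := by
  rcases Nat.eq_zero_or_pos t with rfl | ht
  -- for `t = 0` the truncated `t - 1 = 0` makes the claimed bound `2`
  · calc monotoneSum g a 1 ≤ (∑' m, g (m + (0 + 1))) ^ a := monotoneSum_le_tail_pow g le_rfl a
      _ ≤ 1 := pow_le_one' (hσ.trans (by norm_num)) a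
      _ ≤ 2 * (a + (0 - 1)).choose (0 - 1) := by simp
  · calc monotoneSum g a 1
        ≤ (a + (t - 1)).choose (t - 1) * ∑ j ∈ range (a + 1), (∑' m, g (m + (t + 1))) ^ j :=
          monotoneSum_le_choose_mul g a ht hg
      _ ≤ (a + (t - 1)).choose (t - 1) * 2 := by gcongr; exact ENNReal.sum_range_pow_le_two hσ _
      _ = 2 * (a + (t - 1)).choose (t - 1) := mul_comm _ _

end monotoneSum

theorem append_mem_symIdx_iff {a b : ℕ} {u : Fin a → ℕ} {v : Fin b → ℕ} :
    Fin.append u v ∈ symIdx a (a + b) ↔ u ∈ monotoneFrom a 1 ∧ ∀ j, 1 ≤ v j := by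
  simp only [symIdx, monotoneFrom, Set.mem_ofPred_eq, Fin.forall_fin_add (P := fun i => 1 ≤ _),
    Fin.append_left, Fin.append_right]
  refine ⟨fun ⟨⟨hu, hv⟩, hmono⟩ => ⟨⟨hu, fun i j hij => ?_⟩, hv⟩,
    fun ⟨⟨hu, hmono⟩, hv⟩ => ⟨⟨hu, hv⟩, fun i j hij hj => ?_⟩⟩
  · simpa using hmono (Fin.castAdd b i) (Fin.castAdd b j) hij j.isLt
  · obtain ⟨i, rfl⟩ : ∃ i' : Fin a, Fin.castAdd b i' = i := ⟨⟨i, by omega⟩, rfl⟩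
    obtain ⟨j, rfl⟩ : ∃ j' : Fin a, Fin.castAdd b j' = j := ⟨⟨j, hj⟩, rfl⟩
    simpa using hmono hij

theorem tsum_indicator_symIdx (g : ℕ → ℝ≥0∞) (a b : ℕ) :
    ∑' k : Fin (a + b) → ℕ, (symIdx a (a + b)).indicator (fun k => ∏ l, g (k l)) k
      = monotoneSum g a 1 * (∑' m, g (m + 1)) ^ b := by
  rw [← (Fin.appendEquiv a b).tsum_eq, ENNReal.tsum_prod', ← ENNReal.tsum_indicator_forall_le,
    monotoneSum, ← ENNReal.tsum_mul_right]
  refine tsum_congr fun u => ?_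
  rw [← ENNReal.tsum_mul_left]
  refine tsum_congr fun v => ?_
  change (symIdx a (a + b)).indicator _ (Fin.append u v) = _
  by_cases hu : u ∈ monotoneFrom a 1 <;> by_cases hv : ∀ j, 1 ≤ v j
  · rw [Set.indicator_of_mem (append_mem_symIdx_iff.2 ⟨hu, hv⟩), Set.indicator_of_mem hu,
      Set.indicator_of_mem (s := {v : Fin b → ℕ | ∀ j, 1 ≤ v j}) hv]
    simp only [Fin.prod_univ_add, Fin.append_left, Fin.append_right]
  all_goals rw [Set.indicator_of_notMem fun h => by have := append_mem_symIdx_iff.1 h; tauto]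
  · rw [Set.indicator_of_notMem (s := {v : Fin b → ℕ | ∀ j, 1 ≤ v j}) hv, mul_zero]
  all_goals rw [Set.indicator_of_notMem hu, zero_mul]

theorem ncard_lt_le_rpow_mul {α : Type*} (S : Set α) (F : α → ℝ) {τ δ M : ℝ} (hτ : 0 < τ)
    (hδ : 0 < δ) (hM : 0 ≤ M)
    (h : ∑' x, S.indicator (fun x => ENNReal.ofReal (F x ^ τ)) x ≤ ENNReal.ofReal M) :
    {x | x ∈ S ∧ δ < F x}.Finite ∧ ({x | x ∈ S ∧ δ < F x}.ncard : ℝ) ≤ δ ^ (-τ) * M := by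
  have hδτ : 0 < δ ^ τ := Real.rpow_pos_of_pos hδ τ
  obtain ⟨hfin, hcard⟩ := ENNReal.ncard_mul_le_tsum
    (f := S.indicator fun x => ENNReal.ofReal (F x ^ τ)) (ENNReal.ofReal_pos.2 hδτ).ne'
    (ne_top_of_le_ne_top ENNReal.ofReal_ne_top h)
  have hsub : {x | x ∈ S ∧ δ < F x} ⊆
      {x | ENNReal.ofReal (δ ^ τ) < S.indicator (fun x => ENNReal.ofReal (F x ^ τ)) x} :=
    fun x ⟨hS, hx⟩ => by
      rw [Set.mem_ofPred_eq, Set.indicator_of_mem hS, ENNReal.ofReal_lt_ofReal_iff']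
      exact ⟨Real.rpow_lt_rpow hδ.le hx hτ, hδτ.trans (Real.rpow_lt_rpow hδ.le hx hτ)⟩
  refine ⟨hfin.subset hsub, ?_⟩
  have hle : ({x | x ∈ S ∧ δ < F x}.ncard : ℝ≥0∞) * ENNReal.ofReal (δ ^ τ) ≤ ENNReal.ofReal M :=
    calc _ ≤ _ := by gcongr
      _ ≤ _ := hcard.trans h
  rw [← ENNReal.ofReal_natCast, ← ENNReal.ofReal_mul (by positivity),
    ENNReal.ofReal_le_ofReal_iff hM, ← le_div_iff₀ hδτ] at hle
  rwa [Real.rpow_neg hδ.le, inv_mul_eq_div]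

theorem exists_tsum_rpow_tail_le_half {Λ : ℕ → ℝ} (hnn : ∀ m, 0 ≤ Λ m)
    (hmono : ∀ m n : ℕ, 1 ≤ m → m ≤ n → Λ n ≤ Λ m) {τ₀ : ℝ} (hτ₀ : 0 < τ₀)
    (hsum : Summable fun m => Λ (m + 1) ^ τ₀) {t : ℕ} (ht : Λ (t + 1) < 1) :
    ∃ τ : ℝ, 0 < τ ∧ ∑' m, ENNReal.ofReal (Λ (m + (t + 1)) ^ τ) ≤ 1 / 2 := by
  have hT : ∑' m, ENNReal.ofReal (Λ (m + 1) ^ τ₀) ≠ ∞ := by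
    rw [← ENNReal.ofReal_tsum_of_nonneg (fun m => Real.rpow_nonneg (hnn _) _) hsum]
    exact ENNReal.ofReal_ne_top
  set T := ∑' m, ENNReal.ofReal (Λ (m + 1) ^ τ₀)
  have hlim : Filter.Tendsto (fun n : ℕ => ENNReal.ofReal (Λ (t + 1)) ^ n * T) Filter.atTop
      (nhds 0) := by
    simpa using ENNReal.Tendsto.mul_const (ENNReal.tendsto_pow_atTop_nhds_zero_of_lt_one
      (ENNReal.ofReal_lt_one.2 ht)) (Or.inr hT)
  obtain ⟨n, hn⟩ :=
    (hlim.eventually (eventually_le_nhds (by norm_num : (0 : ℝ≥0∞) < 1 / 2))).exists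
  refine ⟨τ₀ + n, by positivity, le_trans ?_ hn⟩
  calc ∑' m, ENNReal.ofReal (Λ (m + (t + 1)) ^ (τ₀ + n))
      ≤ ∑' m, ENNReal.ofReal (Λ (t + 1)) ^ n * ENNReal.ofReal (Λ (m + t + 1) ^ τ₀) := by
        refine ENNReal.tsum_le_tsum fun m => ?_
        rw [← ENNReal.ofReal_pow (hnn _), ← ENNReal.ofReal_mul (pow_nonneg (hnn _) n), ← add_assoc,
          Real.rpow_add' (hnn _) (by positivity), Real.rpow_natCast, mul_comm]
        refine ENNReal.ofReal_le_ofReal (mul_le_mul_of_nonneg_right ?_ (Real.rpow_nonneg (hnn _) _))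
        exact pow_le_pow_left₀ (hnn _) (hmono _ _ (by omega) (by omega)) n
    _ ≤ ENNReal.ofReal (Λ (t + 1)) ^ n * T := by
        rw [ENNReal.tsum_mul_left]
        gcongr
        exact ENNReal.tsum_comp_le_tsum_of_injective (add_left_injective t)
          fun m => ENNReal.ofReal (Λ (m + 1) ^ τ₀)

theorem tsum_add_one_le {g : ℕ → ℝ≥0∞} {t : ℕ} (hg : ∀ m, 1 ≤ m → m ≤ t → g m ≤ 1)
    (hσ : ∑' m, g (m + (t + 1)) ≤ 1) : ∑' m, g (m + 1) ≤ t + 1 := by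
  rw [← ENNReal.summable.sum_add_tsum_nat_add' (k := t)]
  gcongr
  · calc ∑ i ∈ range t, g (i + 1) ≤ ∑ _i ∈ range t, 1 :=
          sum_le_sum fun i hi => hg _ (by omega) (by simpa using hi)
      _ = t := by simp
  · simpa only [add_assoc] using hσ

theorem tsum_indicator_symIdx_le {g : ℕ → ℝ≥0∞} {t : ℕ} (hg : ∀ m, 1 ≤ m → m ≤ t → g m ≤ 1)
    (hσ : ∑' m, g (m + (t + 1)) ≤ 1 / 2) (a b : ℕ) :
    ∑' k : Fin (a + b) → ℕ, (symIdx a (a + b)).indicator (fun k => ∏ l, g (k l)) k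
      ≤ ((2 * (a + (t - 1)).choose (t - 1) * (t + 1) ^ b : ℕ) : ℝ≥0∞) := by
  rw [tsum_indicator_symIdx]
  push_cast
  gcongr
  · exact monotoneSum_le_two_mul_choose g hg hσ a
  · exact tsum_add_one_le hg (hσ.trans (by norm_num))

theorem ncard_symIdx_le {Λ : ℕ → ℝ} (hnn : ∀ m, 0 ≤ Λ m)
    (hmono : ∀ m n : ℕ, 1 ≤ m → m ≤ n → Λ n ≤ Λ m) {τ₀ : ℝ} (hτ₀ : 0 < τ₀)
    (hsum : Summable fun m => Λ (m + 1) ^ τ₀) {t : ℕ} (hΛ : ∀ m, 1 ≤ m → m ≤ t → Λ m ≤ 1)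
    (ht : Λ (t + 1) < 1) :
    ∃ p : ℝ, 0 < p ∧ ∀ a d : ℕ, a ≤ d → ∀ ε : ℝ, 0 < ε →
      {k : Fin d → ℕ | k ∈ symIdx a d ∧ ε ^ 2 < ∏ l, Λ (k l)}.Finite ∧
      ({k : Fin d → ℕ | k ∈ symIdx a d ∧ ε ^ 2 < ∏ l, Λ (k l)}.ncard : ℝ) ≤
        ε ^ (-p) * ((2 * (a + (t - 1)).choose (t - 1) * (t + 1) ^ (d - a) : ℕ) : ℝ) := by
  obtain ⟨τ, hτ, hσ⟩ := exists_tsum_rpow_tail_le_half hnn hmono hτ₀ hsum ht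
  refine ⟨2 * τ, by positivity, fun a d had ε hε => ?_⟩
  obtain ⟨b, rfl⟩ := Nat.exists_eq_add_of_le had
  have hw := tsum_indicator_symIdx_le (g := fun m => ENNReal.ofReal (Λ m ^ τ))
    (fun m h1 h2 => ENNReal.ofReal_le_one.2 (Real.rpow_le_one (hnn m) (hΛ m h1 h2) hτ.le)) hσ a b
  rw [← ENNReal.ofReal_natCast] at hw
  simp_rw [← ENNReal.ofReal_prod_of_nonneg fun _ _ => Real.rpow_nonneg (hnn _) _,
    Real.finsetProd_rpow _ _ (fun _ _ => hnn _)] at hw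
  have hpow : ε ^ (-(2 * τ)) = (ε ^ 2) ^ (-τ) := by
    rw [← Real.rpow_natCast, ← Real.rpow_mul hε.le]
    norm_num
  rw [Nat.add_sub_cancel_left, hpow]
  exact ncard_lt_le_rpow_mul (symIdx a (a + b)) (fun k => ∏ l, Λ (k l)) hτ (pow_pos hε 2)
    (Nat.cast_nonneg _) hw

theorem exists_lt_one_of_summable_rpow {Λ : ℕ → ℝ} {τ₀ : ℝ} (hτ₀ : 0 < τ₀)
    (hsum : Summable fun m => Λ (m + 1) ^ τ₀) : ∃ t, Λ (t + 1) < 1 := by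
  obtain ⟨t, ht⟩ := (hsum.tendsto_atTop_zero.eventually (eventually_lt_nhds one_pos)).exists
  exact ⟨t, lt_of_not_ge fun h => ht.not_ge (Real.one_le_rpow h hτ₀.le)⟩

theorem pow_le_rpow_of_le_mul_log {x y c : ℝ} {b : ℕ} (hx : 1 ≤ x) (hy : 0 < y)
    (hb : (b : ℝ) ≤ c * Real.log y) : x ^ b ≤ y ^ (c * Real.log x) := by
  rw [← Real.rpow_natCast, Real.rpow_def_of_pos (by linarith), Real.rpow_def_of_pos hy]
  refine Real.exp_le_exp.2 ?_
  calc Real.log x * b ≤ Real.log x * (c * Real.log y) := by gcongr; exact Real.log_nonneg hx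
    _ = Real.log y * (c * Real.log x) := by ring

theorem two_mul_choose_mul_pow_le {a d t : ℕ} {c : ℝ} (had : a ≤ d) (hd : 1 ≤ d)
    (hb : ((d - a : ℕ) : ℝ) ≤ c * Real.log d) :
    ((2 * (a + (t - 1)).choose (t - 1) * (t + 1) ^ (d - a) : ℕ) : ℝ) ≤
      2 * ((t : ℝ) + 1) ^ (t - 1) * (d : ℝ) ^ (((t - 1 : ℕ) : ℝ) + c * Real.log (t + 1)) := by
  have hd₀ : (0 : ℝ) < d := by exact_mod_cast hd
  have hchoose : ((a + (t - 1)).choose (t - 1) : ℝ) ≤ (((t + 1) * d) ^ (t - 1) : ℕ) := by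
    exact_mod_cast (Nat.choose_le_pow _ _).trans (Nat.pow_le_pow_left
      (by nlinarith [Nat.sub_le t 1, Nat.le_mul_of_pos_right t hd]) _)
  have hpow := pow_le_rpow_of_le_mul_log (x := (t : ℝ) + 1) (by simp) hd₀ hb
  push_cast at hchoose ⊢
  rw [Real.rpow_add hd₀, Real.rpow_natCast]
  calc 2 * ((a + (t - 1)).choose (t - 1) : ℝ) * ((t : ℝ) + 1) ^ (d - a)
      ≤ 2 * (((t : ℝ) + 1) * d) ^ (t - 1) * (d : ℝ) ^ (c * Real.log (t + 1)) := by gcongr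
    _ = _ := by rw [mul_pow]; ring

theorem stmt_6_general
    (Λ : ℕ → ℝ) (hnn : ∀ m, 0 ≤ Λ m)
    (hmono : ∀ m n : ℕ, 1 ≤ m → m ≤ n → Λ n ≤ Λ m)
    (τ₀ : ℝ) (hτ₀ : 0 < τ₀) (hsum : Summable (fun m : ℕ => Λ (m + 1) ^ τ₀))
    (a : ℕ → ℕ) (ha : ∀ d : ℕ, 1 ≤ d → 1 ≤ a d ∧ a d ≤ d) :
    -- (i) λ₁ < 1 implies strong polynomial tractability
    (Λ 1 < 1 →
      ∃ C p : ℝ, 0 < C ∧ 0 < p ∧ ∀ d : ℕ, 1 ≤ d → ∀ ε : ℝ, 0 < ε → ε ≤ 1 →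
        {k : Fin d → ℕ | k ∈ symIdx (a d) d ∧ ε ^ 2 < ∏ l, Λ (k l)}.Finite ∧
        ({k : Fin d → ℕ | k ∈ symIdx (a d) d ∧ ε ^ 2 < ∏ l, Λ (k l)}.ncard : ℝ) ≤
          C * ε ^ (-p)) ∧
    -- (ii) λ₁ = 1 > λ₂ and b_d = O(1) imply strong polynomial tractability
    (Λ 1 = 1 → Λ 2 < 1 → (∃ B : ℕ, ∀ d : ℕ, 1 ≤ d → d - a d ≤ B) →
      ∃ C p : ℝ, 0 < C ∧ 0 < p ∧ ∀ d : ℕ, 1 ≤ d → ∀ ε : ℝ, 0 < ε → ε ≤ 1 →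
        {k : Fin d → ℕ | k ∈ symIdx (a d) d ∧ ε ^ 2 < ∏ l, Λ (k l)}.Finite ∧
        ({k : Fin d → ℕ | k ∈ symIdx (a d) d ∧ ε ^ 2 < ∏ l, Λ (k l)}.ncard : ℝ) ≤
          C * ε ^ (-p)) ∧
    -- (iii) λ₁ = 1 and b_d = O(ln d) imply polynomial tractability
    (Λ 1 = 1 → (∃ c : ℝ, 0 < c ∧ ∀ d : ℕ, 2 ≤ d → ((d - a d : ℕ) : ℝ) ≤ c * Real.log d) →
      ∃ C p q : ℝ, 0 < C ∧ 0 < p ∧ 0 ≤ q ∧ ∀ d : ℕ, 1 ≤ d → ∀ ε : ℝ, 0 < ε → ε ≤ 1 →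
        {k : Fin d → ℕ | k ∈ symIdx (a d) d ∧ ε ^ 2 < ∏ l, Λ (k l)}.Finite ∧
        ({k : Fin d → ℕ | k ∈ symIdx (a d) d ∧ ε ^ 2 < ∏ l, Λ (k l)}.ncard : ℝ) ≤
          C * ε ^ (-p) * (d : ℝ) ^ q) := by
  have hle_one (h1 : Λ 1 = 1) (t : ℕ) : ∀ m, 1 ≤ m → m ≤ t → Λ m ≤ 1 :=
    fun m hm _ => h1 ▸ hmono 1 m le_rfl hm
  refine ⟨fun h1 => ?_, fun h1 h2 ⟨B, hB⟩ => ?_, fun h1 ⟨c, hc, hlog⟩ => ?_⟩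
  · obtain ⟨p, hp, H⟩ := ncard_symIdx_le hnn hmono hτ₀ hsum (t := 0) (by omega) h1
    refine ⟨2, p, two_pos, hp, fun d hd ε hε _ => (H _ d (ha d hd).2 ε hε).imp_right
      fun h => h.trans_eq ?_⟩
    simp [mul_comm]
  · obtain ⟨p, hp, H⟩ := ncard_symIdx_le hnn hmono hτ₀ hsum (hle_one h1 1) h2
    refine ⟨2 * 2 ^ B, p, by positivity, hp, fun d hd ε hε _ => (H _ d (ha d hd).2 ε hε).imp_right
      fun h => h.trans ?_⟩
    rw [mul_comm]
    gcongr
    push_cast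
    simpa using pow_le_pow_right₀ one_le_two (hB d hd)
  · obtain ⟨t, ht⟩ := exists_lt_one_of_summable_rpow hτ₀ hsum
    obtain ⟨p, hp, H⟩ := ncard_symIdx_le hnn hmono hτ₀ hsum (hle_one h1 t) ht
    refine ⟨2 * ((t : ℝ) + 1) ^ (t - 1), p, ((t - 1 : ℕ) : ℝ) + c * Real.log (t + 1),
      by positivity, hp, by have := Real.log_nonneg (x := t + 1) (by simp); positivity,
      fun d hd ε hε _ => (H _ d (ha d hd).2 ε hε).imp_right fun h => h.trans ?_⟩
    have hb : ((d - a d : ℕ) : ℝ) ≤ c * Real.log d := by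
      rcases hd.eq_or_lt with rfl | hd
      · simp [Nat.sub_eq_zero_of_le (ha 1 le_rfl).1]
      · exact hlog d hd
    refine (mul_le_mul_of_nonneg_left (two_mul_choose_mul_pow_le (ha d hd).2 hd hb)
      (by positivity)).trans_eq (by ring)

/-- Sufficient conditions for (strong) polynomial tractability of symmetric tensor
product problems with respect to the absolute error criterion, assuming `λ ∈ ℓ_{τ₀}`.
Here `b_d = d - a_d` is the number of coordinates without symmetry conditions. -/
theorem stmt_6
    (Λ : ℕ → ℝ) (hnn : ∀ m, 0 ≤ Λ m)
    (hmono : ∀ m n : ℕ, 1 ≤ m → m ≤ n → Λ n ≤ Λ m) (h2 : 0 < Λ 2)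
    (τ₀ : ℝ) (hτ₀ : 0 < τ₀) (hsum : Summable (fun m : ℕ => Λ (m + 1) ^ τ₀))
    (a : ℕ → ℕ) (ha : ∀ d : ℕ, 1 ≤ d → 1 ≤ a d ∧ a d ≤ d) :
    -- (i) λ₁ < 1 implies strong polynomial tractability
    (Λ 1 < 1 →
      ∃ C p : ℝ, 0 < C ∧ 0 < p ∧ ∀ d : ℕ, 1 ≤ d → ∀ ε : ℝ, 0 < ε → ε ≤ 1 →
        {k : Fin d → ℕ | k ∈ symIdx (a d) d ∧ ε ^ 2 < ∏ l, Λ (k l)}.Finite ∧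
        ({k : Fin d → ℕ | k ∈ symIdx (a d) d ∧ ε ^ 2 < ∏ l, Λ (k l)}.ncard : ℝ) ≤
          C * ε ^ (-p)) ∧
    -- (ii) λ₁ = 1 > λ₂ and b_d = O(1) imply strong polynomial tractability
    (Λ 1 = 1 → Λ 2 < 1 → (∃ B : ℕ, ∀ d : ℕ, 1 ≤ d → d - a d ≤ B) →
      ∃ C p : ℝ, 0 < C ∧ 0 < p ∧ ∀ d : ℕ, 1 ≤ d → ∀ ε : ℝ, 0 < ε → ε ≤ 1 →
        {k : Fin d → ℕ | k ∈ symIdx (a d) d ∧ ε ^ 2 < ∏ l, Λ (k l)}.Finite ∧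
        ({k : Fin d → ℕ | k ∈ symIdx (a d) d ∧ ε ^ 2 < ∏ l, Λ (k l)}.ncard : ℝ) ≤
          C * ε ^ (-p)) ∧
    -- (iii) λ₁ = 1 and b_d = O(ln d) imply polynomial tractability
    (Λ 1 = 1 → (∃ c : ℝ, 0 < c ∧ ∀ d : ℕ, 2 ≤ d → ((d - a d : ℕ) : ℝ) ≤ c * Real.log d) →
      ∃ C p q : ℝ, 0 < C ∧ 0 < p ∧ 0 ≤ q ∧ ∀ d : ℕ, 1 ≤ d → ∀ ε : ℝ, 0 < ε → ε ≤ 1 →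
        {k : Fin d → ℕ | k ∈ symIdx (a d) d ∧ ε ^ 2 < ∏ l, Λ (k l)}.Finite ∧
        ({k : Fin d → ℕ | k ∈ symIdx (a d) d ∧ ε ^ 2 < ∏ l, Λ (k l)}.ncard : ℝ) ≤
          C * ε ^ (-p) * (d : ℝ) ^ q) :=
  stmt_6_general Λ hnn hmono τ₀ hτ₀ hsum a ha
end

section
/- Let λ = (λ_m)_{m≥1} be a nonincreasing sequence of nonnegative reals with λ_2 > 0 and Σ_m λ_m^{τ₀} < ∞ for some τ₀ ∈ (0,∞), let 1 ≤ a_d ≤ d for each d ≥ 1, and set ∇_d = {k ∈ ℕ^d : k_1 < … < k_{a_d}} (antisymmetric setting), with n(ε,d) = #{k ∈ ∇_d : ∏_{l=1}^d λ_{k_l} > ε²}. Then: (i) if λ_1 < 1, there exist C, p > 0 such that n(ε,d) ≤ C·ε^{−p} for all d ∈ ℕ and ε ∈ (0,1] (strong polynomial tractability), independently of the numbers a_d; (ii) if there exist τ ≥ τ₀ and d₀ ∈ ℕ such that ln(a_d!)/d ≥ ln( Σ_{m=1}^∞ λ_m^τ ) for all d ≥ d₀, then the problem is likewise strongly polynomially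 tractable. -/
/-- The set counted by the information complexity `n(ε,d)` of the antisymmetric problem
with respect to the absolute error criterion. -/
def asymCount (Λ : ℕ → ℝ) (a : ℕ → ℕ) (d : ℕ) (ε : ℝ) : Set (Fin d → ℕ) :=
  {k : Fin d → ℕ | k ∈ asymIdx (a d) d ∧ ε ^ 2 < ∏ l, Λ (k l)}

/-- Strong polynomial tractability of the antisymmetric problem (absolute error). -/
def asymSPT (Λ : ℕ → ℝ) (a : ℕ → ℕ) : Prop :=
  ∃ C p : ℝ, 0 < C ∧ 0 < p ∧ ∀ d : ℕ, 1 ≤ d → ∀ ε : ℝ, 0 < ε → ε ≤ 1 →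
    (asymCount Λ a d ε).Finite ∧ ((asymCount Λ a d ε).ncard : ℝ) ≤ C * ε ^ (-p)

open scoped ENNReal in
lemma myCheb {ι : Type*} (A : Set ι) (f : ι → ℝ≥0∞) (c : ℝ≥0∞) (hc : c ≠ 0)
    (hA : ∀ k ∈ A, c ≤ f k) (hfin : ∑' k : A, f k ≠ ⊤) :
    A.Finite ∧ c * A.ncard ≤ ∑' k : A, f k := by
  have hAfin : A.Finite := by
    by_contra h
    have : Infinite A := Set.infinite_coe_iff.2 h
    have htop : (⊤ : ℝ≥0∞) ≤ ∑' k : A, f k := by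
      calc (⊤ : ℝ≥0∞) = ∑' _ : A, c := (ENNReal.tsum_const_eq_top_of_ne_zero hc).symm
        _ ≤ ∑' k : A, f k := ENNReal.tsum_le_tsum fun k => hA k k.2
    exact hfin (top_le_iff.1 htop)
  refine ⟨hAfin, ?_⟩
  classical
  haveI := hAfin.fintype
  rw [tsum_fintype]
  have hcard : A.ncard = (Finset.univ : Finset A).card := by
    rw [Set.ncard_eq_toFinset_card', Set.toFinset_card, Finset.card_univ]
  calc c * A.ncard = ∑ _k : A, c := by
        rw [Finset.sum_const, nsmul_eq_mul, mul_comm, hcard]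
    _ ≤ ∑ k : A, f k := Finset.sum_le_sum fun k _ => hA k k.2

open scoped ENNReal in
private lemma myPiProd (G : ℕ → ℝ≥0∞) : ∀ d : ℕ,
    ∑' k : Fin d → ℕ, ∏ l, G (k l) = (∑' m, G m) ^ d := by
  intro d
  induction d with
  | zero =>
    rw [pow_zero]
    have h1 : (∑' k : Fin 0 → ℕ, ∏ l, G (k l)) = ∑' _k : Fin 0 → ℕ, (1 : ℝ≥0∞) :=
      tsum_congr fun k => by simp
    rw [h1, tsum_eq_single (fun i => i.elim0)
      (fun b hb => absurd (funext fun i => i.elim0) hb)]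
  | succ d ih =>
    have he := ((Fin.consEquiv (fun _ : Fin (d + 1) => ℕ)).tsum_eq
      (fun k => ∏ l, G (k l))).symm
    rw [he]
    have h2 : ∀ p : ℕ × (Fin d → ℕ),
        (∏ l, G ((Fin.consEquiv (fun _ : Fin (d + 1) => ℕ)) p l))
          = G p.1 * ∏ l, G (p.2 l) := by
      intro p
      rw [Fin.prod_univ_succ]
      simp [Fin.consEquiv]
    rw [tsum_congr h2, ENNReal.tsum_prod']
    simp only [ENNReal.tsum_mul_left, ENNReal.tsum_mul_right]
    rw [ih, pow_succ, mul_comm]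

open scoped ENNReal in
lemma myMain (G : ℕ → ℝ≥0∞) (a d : ℕ) (had : a ≤ d) :
    (a.factorial : ℝ≥0∞) * ∑' k : asymIdx a d, ∏ l, G (k.1 l)
      ≤ (∑' m, G m) ^ d := by
  classical
  haveI : WellFoundedLT (Fin a) := Finite.to_wellFoundedLT
  let emb : Fin a ≃ {l : Fin d // (l : ℕ) < a} :=
    { toFun := fun i => ⟨⟨i.1, lt_of_lt_of_le i.2 had⟩, i.2⟩
      invFun := fun l => ⟨(l.1 : ℕ), l.2⟩
      left_inv := fun i => rfl
      right_inv := fun l => rfl }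
  have hsm : ∀ k : Fin d → ℕ, k ∈ asymIdx a d →
      StrictMono (fun i : Fin a => k (emb i).1) := by
    intro k hk i j hij
    exact hk.2 _ _ (Fin.mk_lt_mk.2 (Fin.lt_def.1 hij)) j.2
  let Φ : Equiv.Perm (Fin a) × (asymIdx a d) → (Fin d → ℕ) :=
    fun p => p.2.1 ∘ (p.1.extendDomain emb)
  have hΦval : ∀ (σ : Equiv.Perm (Fin a)) (k : asymIdx a d) (i : Fin a),
      Φ (σ, k) (emb i).1 = k.1 (emb (σ i)).1 := by
    intro σ k i
    show k.1 ((σ.extendDomain emb) ((emb i) : Fin d)) = _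
    rw [Equiv.Perm.extendDomain_apply_subtype σ emb (emb i).2]
    show k.1 (emb (σ (emb.symm (emb i)))) = _
    rw [emb.symm_apply_apply i]
  have hΦout : ∀ (σ : Equiv.Perm (Fin a)) (k : asymIdx a d) (l : Fin d),
      ¬ ((l : ℕ) < a) → Φ (σ, k) l = k.1 l := by
    intro σ k l hl
    show k.1 ((σ.extendDomain emb) l) = _
    rw [Equiv.Perm.extendDomain_apply_not_subtype σ emb hl]
  have hΦ : Function.Injective Φ := by
    rintro ⟨σ, k⟩ ⟨σ', k'⟩ h
    have hfun : (fun i : Fin a => k.1 (emb (σ i)).1)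
        = (fun i : Fin a => k'.1 (emb (σ' i)).1) := by
      funext i
      rw [← hΦval σ k i, ← hΦval σ' k' i, h]
    have hs := hsm k.1 k.2
    have hs' := hsm k'.1 k'.2
    have hrange : Set.range (fun i : Fin a => k.1 (emb i).1)
        = Set.range (fun i : Fin a => k'.1 (emb i).1) := by
      have h1 := σ.surjective.range_comp (fun i : Fin a => k.1 (emb i).1)
      have h2 := σ'.surjective.range_comp (fun i : Fin a => k'.1 (emb i).1)
      rw [← h1, ← h2]
      exact congrArg Set.range hfun
    have hkk' : (fun i : Fin a => k.1 (emb i).1) = (fun i : Fin a => k'.1 (emb i).1) :=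
      (StrictMono.range_inj hs hs').1 hrange
    have hσ : σ = σ' := by
      refine Equiv.ext fun i => ?_
      exact hs'.injective ((congrFun hkk' (σ i)).symm.trans (congrFun hfun i))
    have hk : k = k' := by
      apply Subtype.ext
      funext l
      by_cases hl : (l : ℕ) < a
      · have hle : l = (emb ⟨(l : ℕ), hl⟩).1 := rfl
        rw [hle]
        exact congrFun hkk' ⟨(l : ℕ), hl⟩
      · rw [← hΦout σ k l hl, ← hΦout σ' k' l hl, h]
    rw [Prod.ext_iff]
    exact ⟨hσ, hk⟩
  calc (a.factorial : ℝ≥0∞) * ∑' k : asymIdx a d, ∏ l, G (k.1 l)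
      = ∑' p : Equiv.Perm (Fin a) × (asymIdx a d), ∏ l, G (p.2.1 l) := by
        rw [ENNReal.tsum_prod',
          tsum_fintype (fun _σ : Equiv.Perm (Fin a) =>
            ∑' k : asymIdx a d, ∏ l, G (k.1 l)),
          Finset.sum_const, nsmul_eq_mul, Finset.card_univ, Fintype.card_perm,
          Fintype.card_fin]
    _ = ∑' p : Equiv.Perm (Fin a) × (asymIdx a d), ∏ l, G (Φ p l) := by
        refine tsum_congr fun p => ?_
        exact (Equiv.prod_comp (p.1.extendDomain emb) (fun l => G (p.2.1 l))).symm
    _ ≤ ∑' k : Fin d → ℕ, ∏ l, G (k l) :=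
        ENNReal.tsum_comp_le_tsum_of_injective hΦ (fun k => ∏ l, G (k l))
    _ = (∑' m, G m) ^ d := myPiProd G d

lemma mySummable (Λ : ℕ → ℝ) (hnn : ∀ m, 0 ≤ Λ m)
    (hmono : ∀ m n : ℕ, 1 ≤ m → m ≤ n → Λ n ≤ Λ m)
    (τ₀ τ : ℝ) (hτ₀ : 0 < τ₀) (h : τ₀ ≤ τ)
    (hsum : Summable fun m : ℕ => Λ (m + 1) ^ τ₀) :
    Summable fun m : ℕ => Λ (m + 1) ^ τ := by
  have hτ : (0:ℝ) < τ := lt_of_lt_of_le hτ₀ h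
  set K : ℝ := max 1 (Λ 1) ^ (τ - τ₀) with hK
  refine Summable.of_nonneg_of_le (fun m => Real.rpow_nonneg (hnn _) _)
    (fun m => ?_) (hsum.mul_right K)
  by_cases h0 : Λ (m + 1) = 0
  · rw [h0, Real.zero_rpow (ne_of_gt hτ)]
    have : (0:ℝ) ≤ K := Real.rpow_nonneg (le_trans zero_le_one (le_max_left _ _)) _
    positivity
  · have hpos : 0 < Λ (m + 1) := lt_of_le_of_ne (hnn _) (Ne.symm h0)
    have hsplit : Λ (m + 1) ^ τ = Λ (m + 1) ^ τ₀ * Λ (m + 1) ^ (τ - τ₀) := by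
      rw [← Real.rpow_add hpos]; ring_nf
    rw [hsplit]
    refine mul_le_mul_of_nonneg_left ?_ (Real.rpow_nonneg (hnn _) _)
    refine Real.rpow_le_rpow hpos.le ?_ (sub_nonneg.2 h)
    exact le_trans (hmono 1 (m + 1) le_rfl (by omega)) (le_max_right _ _)

open scoped ENNReal in
lemma myKey (Λ : ℕ → ℝ) (hnn : ∀ m, 0 ≤ Λ m) (τ : ℝ) (hτ : 0 < τ)
    (hsum : Summable (fun m : ℕ => Λ (m + 1) ^ τ))
    (a : ℕ → ℕ) (d : ℕ) (had : a d ≤ d) (ε : ℝ) (hε : 0 < ε) :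
    (asymCount Λ a d ε).Finite ∧
      ((a d).factorial : ℝ) * ((ε ^ 2) ^ τ * ((asymCount Λ a d ε).ncard : ℝ))
        ≤ (∑' m : ℕ, Λ (m + 1) ^ τ) ^ d := by
  classical
  set G : ℕ → ℝ≥0∞ := fun m => if m = 0 then 0 else ENNReal.ofReal (Λ m ^ τ) with hG
  set Sr : ℝ := ∑' m : ℕ, Λ (m + 1) ^ τ with hSrdef
  have hrnn : ∀ m : ℕ, 0 ≤ Λ m ^ τ := fun m => Real.rpow_nonneg (hnn m) τ
  have hSr0 : 0 ≤ Sr := tsum_nonneg fun m => hrnn (m + 1)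
  have hGS : ∑' m, G m = ENNReal.ofReal Sr := by
    rw [tsum_eq_zero_add' ENNReal.summable]
    have h0 : G 0 = 0 := if_pos rfl
    have h1 : ∀ m : ℕ, G (m + 1) = ENNReal.ofReal (Λ (m + 1) ^ τ) :=
      fun m => if_neg (Nat.succ_ne_zero m)
    rw [h0, zero_add, tsum_congr h1,
      ← ENNReal.ofReal_tsum_of_nonneg (fun n => hrnn (n + 1)) hsum]
  set f : (Fin d → ℕ) → ℝ≥0∞ := fun k => ∏ l, G (k l) with hf
  set c : ℝ≥0∞ := ENNReal.ofReal ((ε ^ 2) ^ τ) with hcdef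
  have hcpos : (0:ℝ) < (ε ^ 2) ^ τ := Real.rpow_pos_of_pos (by positivity) τ
  have hc : c ≠ 0 := by
    simp only [hcdef, ne_eq, ENNReal.ofReal_eq_zero, not_le]
    exact hcpos
  have hcle : ∀ k ∈ asymCount Λ a d ε, c ≤ f k := by
    rintro k ⟨⟨hk1, -⟩, hklt⟩
    have hfk : f k = ENNReal.ofReal (∏ l, Λ (k l) ^ τ) := by
      rw [ENNReal.ofReal_prod_of_nonneg (fun i _ => hrnn (k i))]
      exact Finset.prod_congr rfl fun l _ =>
        if_neg (Nat.one_le_iff_ne_zero.1 (hk1 l))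
    rw [hfk]
    apply ENNReal.ofReal_le_ofReal
    rw [Real.finset_prod_rpow _ _ (fun i _ => hnn (k i)) τ]
    exact Real.rpow_le_rpow (sq_nonneg ε) hklt.le hτ.le
  have hsub : asymCount Λ a d ε ⊆ asymIdx (a d) d := fun k hk => hk.1
  have hmono := ENNReal.tsum_mono_subtype f hsub
  have hB := myMain G (a d) d had
  rw [hGS, ← ENNReal.ofReal_pow hSr0] at hB
  have hfacne : ((a d).factorial : ℝ≥0∞) ≠ 0 := by
    simp [Nat.factorial_ne_zero]
  have hIdxfin : ∑' k : asymIdx (a d) d, f k ≠ ⊤ := by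
    intro htop
    rw [htop, ENNReal.mul_top hfacne] at hB
    exact (ENNReal.ofReal_ne_top) (top_le_iff.1 hB)
  have hCntfin : ∑' k : asymCount Λ a d ε, f k ≠ ⊤ :=
    fun htop => hIdxfin (top_le_iff.1 (htop ▸ hmono))
  obtain ⟨hfin, hcard⟩ := myCheb (asymCount Λ a d ε) f c hc hcle hCntfin
  refine ⟨hfin, ?_⟩
  have hchain : ((a d).factorial : ℝ≥0∞) * (c * (asymCount Λ a d ε).ncard)
      ≤ ENNReal.ofReal (Sr ^ d) := by
    calc ((a d).factorial : ℝ≥0∞) * (c * (asymCount Λ a d ε).ncard)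
        ≤ ((a d).factorial : ℝ≥0∞) * ∑' k : asymCount Λ a d ε, f k :=
          mul_le_mul_right hcard _
      _ ≤ ((a d).factorial : ℝ≥0∞) * ∑' k : asymIdx (a d) d, f k :=
          mul_le_mul_right hmono _
      _ ≤ ENNReal.ofReal (Sr ^ d) := hB
  have hrw : ((a d).factorial : ℝ≥0∞) * (c * (asymCount Λ a d ε).ncard)
      = ENNReal.ofReal (((a d).factorial : ℝ) *
          ((ε ^ 2) ^ τ * ((asymCount Λ a d ε).ncard : ℝ))) := by
    rw [ENNReal.ofReal_mul (by positivity), ENNReal.ofReal_mul (by positivity)]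
    rw [ENNReal.ofReal_natCast, ENNReal.ofReal_natCast]
  rw [hrw] at hchain
  exact (ENNReal.ofReal_le_ofReal_iff (by positivity)).1 hchain

lemma myMaster (Λ : ℕ → ℝ) (hnn : ∀ m, 0 ≤ Λ m) (a : ℕ → ℕ)
    (ha : ∀ d : ℕ, 1 ≤ d → 1 ≤ a d ∧ a d ≤ d)
    (τ : ℝ) (hτ : 0 < τ) (hsum : Summable (fun m : ℕ => Λ (m + 1) ^ τ))
    (C : ℝ) (hC : 0 < C)
    (hbd : ∀ d : ℕ, 1 ≤ d →
      (∑' m : ℕ, Λ (m + 1) ^ τ) ^ d ≤ C * ((a d).factorial : ℝ)) :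
    asymSPT Λ a := by
  refine ⟨C, 2 * τ, hC, by positivity, ?_⟩
  intro d hd ε hε hε1
  obtain ⟨h1, h2⟩ := myKey Λ hnn τ hτ hsum a d (ha d hd).2 ε hε
  refine ⟨h1, ?_⟩
  set N : ℝ := ((asymCount Λ a d ε).ncard : ℝ) with hN
  have hfac : (0:ℝ) < ((a d).factorial : ℝ) := by
    exact_mod_cast (a d).factorial_pos
  have h3 : (ε ^ 2) ^ τ * N ≤ C := by
    have h4 : ((a d).factorial : ℝ) * ((ε ^ 2) ^ τ * N)
        ≤ ((a d).factorial : ℝ) * C := by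
      refine h2.trans ((hbd d hd).trans ?_)
      rw [mul_comm]
    exact le_of_mul_le_mul_left h4 hfac
  have hx : (ε ^ 2) ^ τ = ε ^ (2 * τ) := by
    rw [← Real.rpow_natCast ε 2, ← Real.rpow_mul hε.le]
    norm_num
  have hxpos : (0:ℝ) < ε ^ (2 * τ) := Real.rpow_pos_of_pos hε _
  rw [hx] at h3
  rw [Real.rpow_neg hε.le]
  rw [mul_comm, ← le_div_iff₀ hxpos] at h3
  calc N ≤ C / ε ^ (2 * τ) := h3
    _ = C * (ε ^ (2 * τ))⁻¹ := by ring

/-- Sufficient conditions for strong polynomial tractability of antisymmetric tensor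
product problems (absolute error criterion), assuming `λ ∈ ℓ_{τ₀}`: either `λ₁ < 1`,
or the amount of antisymmetry satisfies `ln(a_d!)/d ≥ ln(‖λ‖_{ℓ_τ}^τ)` eventually. -/
theorem stmt_9
    (Λ : ℕ → ℝ) (hnn : ∀ m, 0 ≤ Λ m)
    (hmono : ∀ m n : ℕ, 1 ≤ m → m ≤ n → Λ n ≤ Λ m) (h2 : 0 < Λ 2)
    (τ₀ : ℝ) (hτ₀ : 0 < τ₀) (hsum : Summable (fun m : ℕ => Λ (m + 1) ^ τ₀))
    (a : ℕ → ℕ) (ha : ∀ d : ℕ, 1 ≤ d → 1 ≤ a d ∧ a d ≤ d) :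
    -- (i) λ₁ < 1 implies strong polynomial tractability, whatever the `a_d` are
    (Λ 1 < 1 → asymSPT Λ a) ∧
    -- (ii) sufficiently fast growth of `a_d` implies strong polynomial tractability
    ((∃ τ : ℝ, τ₀ ≤ τ ∧ ∃ d₀ : ℕ, ∀ d : ℕ, d₀ ≤ d →
        Real.log (∑' m : ℕ, Λ (m + 1) ^ τ) ≤ Real.log (Nat.factorial (a d) : ℝ) / d) →
      asymSPT Λ a) := by
  have hL1 : 0 < Λ 1 := lt_of_lt_of_le h2 (hmono 1 2 le_rfl (by norm_num))
  have hfac1 : ∀ n : ℕ, (1:ℝ) ≤ (n.factorial : ℝ) := fun n => by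
    exact_mod_cast n.factorial_pos
  constructor
  · -- branch (i)
    intro hΛ1
    set L : ℝ := Λ 1 with hLdef
    set S₀ : ℝ := ∑' m : ℕ, Λ (m + 1) ^ τ₀ with hS₀def
    have hS₀pos : 0 < S₀ := by
      have hterm : (0:ℝ) < Λ 2 ^ τ₀ := Real.rpow_pos_of_pos h2 τ₀
      have hle : Λ (1 + 1) ^ τ₀ ≤ S₀ :=
        Summable.le_tsum hsum 1 (fun m _ => Real.rpow_nonneg (hnn _) _)
      calc (0:ℝ) < Λ 2 ^ τ₀ := hterm
        _ ≤ S₀ := by exact_mod_cast hle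
    have hLlog : Real.log L < 0 := Real.log_neg hL1 hΛ1
    set t : ℝ := max 0 (-Real.log S₀ / Real.log L) with htdef
    have ht0 : 0 ≤ t := le_max_left _ _
    set τ : ℝ := τ₀ + t with hτdef
    have hττ₀ : τ₀ ≤ τ := le_add_of_nonneg_right ht0
    have hτpos : 0 < τ := lt_of_lt_of_le hτ₀ hττ₀
    have hsumτ := mySummable Λ hnn hmono τ₀ τ hτ₀ hττ₀ hsum
    -- the sum at τ is at most 1
    have hLt_pos : 0 < L ^ t := Real.rpow_pos_of_pos hL1 t
    have hterm : ∀ m : ℕ, Λ (m + 1) ^ τ ≤ Λ (m + 1) ^ τ₀ * L ^ t := by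
      intro m
      by_cases h0 : Λ (m + 1) = 0
      · rw [h0, Real.zero_rpow (ne_of_gt hτpos)]
        have h1 : (0:ℝ) ≤ Λ (m+1) ^ τ₀ := Real.rpow_nonneg (hnn _) _
        positivity
      · have hpos : 0 < Λ (m + 1) := lt_of_le_of_ne (hnn _) (Ne.symm h0)
        rw [hτdef, Real.rpow_add hpos]
        refine mul_le_mul_of_nonneg_left ?_ (Real.rpow_nonneg (hnn _) _)
        exact Real.rpow_le_rpow hpos.le (hmono 1 (m + 1) le_rfl (by omega)) ht0
    have hSτ : (∑' m : ℕ, Λ (m + 1) ^ τ) ≤ S₀ * L ^ t := by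
      calc (∑' m : ℕ, Λ (m + 1) ^ τ) ≤ ∑' m : ℕ, Λ (m + 1) ^ τ₀ * L ^ t :=
            Summable.tsum_le_tsum hterm hsumτ (hsum.mul_right _)
        _ = S₀ * L ^ t := by rw [tsum_mul_right]
    have hLt : L ^ t ≤ S₀⁻¹ := by
      have hmul : t * Real.log L ≤ -Real.log S₀ := by
        have hq : -Real.log S₀ / Real.log L ≤ t := le_max_right _ _
        calc t * Real.log L ≤ (-Real.log S₀ / Real.log L) * Real.log L :=
              mul_le_mul_of_nonpos_right hq hLlog.le
          _ = -Real.log S₀ := div_mul_cancel₀ _ (ne_of_lt hLlog)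
      have hlog : Real.log (L ^ t) ≤ Real.log S₀⁻¹ := by
        rw [Real.log_rpow hL1, Real.log_inv]
        exact hmul
      exact (Real.log_le_log_iff hLt_pos (inv_pos.2 hS₀pos)).1 hlog
    have hS1 : (∑' m : ℕ, Λ (m + 1) ^ τ) ≤ 1 := by
      calc (∑' m : ℕ, Λ (m + 1) ^ τ) ≤ S₀ * L ^ t := hSτ
        _ ≤ S₀ * S₀⁻¹ := mul_le_mul_of_nonneg_left hLt hS₀pos.le
        _ = 1 := mul_inv_cancel₀ (ne_of_gt hS₀pos)
    refine myMaster Λ hnn a ha τ hτpos hsumτ 1 one_pos ?_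
    intro d hd
    have hnn' : 0 ≤ ∑' m : ℕ, Λ (m + 1) ^ τ :=
      tsum_nonneg fun m => Real.rpow_nonneg (hnn _) _
    calc (∑' m : ℕ, Λ (m + 1) ^ τ) ^ d ≤ 1 := pow_le_one₀ hnn' hS1
      _ ≤ 1 * ((a d).factorial : ℝ) := by rw [one_mul]; exact hfac1 _
  · -- branch (ii)
    rintro ⟨τ, hττ₀, d₀, hcond⟩
    have hτpos : 0 < τ := lt_of_lt_of_le hτ₀ hττ₀
    have hsumτ := mySummable Λ hnn hmono τ₀ τ hτ₀ hττ₀ hsum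
    set Sr : ℝ := ∑' m : ℕ, Λ (m + 1) ^ τ with hSrdef
    have hSrpos : 0 < Sr := by
      have hterm : (0:ℝ) < Λ 2 ^ τ := Real.rpow_pos_of_pos h2 τ
      have hle : Λ (1 + 1) ^ τ ≤ Sr :=
        Summable.le_tsum hsumτ 1 (fun m _ => Real.rpow_nonneg (hnn _) _)
      calc (0:ℝ) < Λ 2 ^ τ := hterm
        _ ≤ Sr := by exact_mod_cast hle
    set D : ℕ := max d₀ 1 with hDdef
    set C : ℝ := max Sr 1 ^ D with hCdef
    have hC1 : (1:ℝ) ≤ C := one_le_pow₀ (le_max_right _ _)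
    have hC : (0:ℝ) < C := lt_of_lt_of_le one_pos hC1
    refine myMaster Λ hnn a ha τ hτpos hsumτ C hC ?_
    intro d hd
    by_cases hdD : D ≤ d
    · have hd₀ : d₀ ≤ d := le_trans (le_max_left _ _) hdD
      have hdpos : (0:ℝ) < (d:ℝ) := by exact_mod_cast hd
      have h1 := hcond d hd₀
      have h2' : (d:ℝ) * Real.log Sr ≤ Real.log ((a d).factorial : ℝ) := by
        rw [div_eq_mul_inv] at h1
        calc (d:ℝ) * Real.log Sr ≤ (d:ℝ) * (Real.log ((a d).factorial : ℝ) * ((d:ℝ))⁻¹) :=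
              mul_le_mul_of_nonneg_left h1 hdpos.le
          _ = Real.log ((a d).factorial : ℝ) := by
              field_simp
      have hfacpos : (0:ℝ) < ((a d).factorial : ℝ) := by
        exact_mod_cast (a d).factorial_pos
      have hlogpow : Real.log (Sr ^ d) ≤ Real.log ((a d).factorial : ℝ) := by
        rw [Real.log_pow]
        exact h2'
      have hpow : Sr ^ d ≤ ((a d).factorial : ℝ) :=
        (Real.log_le_log_iff (pow_pos hSrpos d) hfacpos).1 hlogpow
      calc Sr ^ d ≤ ((a d).factorial : ℝ) := hpow
        _ ≤ C * ((a d).factorial : ℝ) := le_mul_of_one_le_left hfacpos.le hC1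
    · push_neg at hdD
      calc Sr ^ d ≤ max Sr 1 ^ d :=
            pow_le_pow_left₀ hSrpos.le (le_max_left _ _) d
        _ ≤ max Sr 1 ^ D := pow_le_pow_right₀ (le_max_right _ _) hdD.le
        _ = C := rfl
        _ ≤ C * ((a d).factorial : ℝ) := le_mul_of_one_le_right hC.le (hfac1 _)
end
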